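/- arXiv:math/0010205 — 7 statements merged into one kernel-verified Lean document; each statement's English description precedes it below -/
import Mathlib

section
/- In a loopless graph on a metric point set where an edge {q,q̄} is present iff |q−q̄| < C_∞(r) for every path r from q to q̄ avoiding the edge {q,q̄} (with C_∞(r) = max of step lengths along r), the resulting graph contains no cycles: on any cycle, the edge of maximal Euclidean length fails the defining condition. -/
/-- The minimax step length `C_∞` of a path, given as a list of points. -/
noncomputable def CInf {d : ℕ} (p : List (EuclideanSpace ℝ (Fin d))) : ℝ :=
  (List.zipWith (fun a b => ‖a - b‖) p p.tail).foldr max 0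

/-- `p` is a finite path in `Q` from `q` to `q'`. -/
def IsPathIn {d : ℕ} (Q : Set (EuclideanSpace ℝ (Fin d)))
    (p : List (EuclideanSpace ℝ (Fin d))) (q q' : EuclideanSpace ℝ (Fin d)) : Prop :=
  (∀ x ∈ p, x ∈ Q) ∧ p.head? = some q ∧ p.getLast? = some q'

/-- The path `p` does not use the (undirected) edge `{a,b}` as a step. -/
def AvoidsEdge {d : ℕ} (p : List (EuclideanSpace ℝ (Fin d)))
    (a b : EuclideanSpace ℝ (Fin d)) : Prop :=
  ∀ i : ℕ, ¬ (p[i]? = some a ∧ p[i + 1]? = some b) ∧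
    ¬ (p[i]? = some b ∧ p[i + 1]? = some a)

/-- The edge relation of `R_∞`: `{a,b}` is an edge iff `a,b ∈ Q`, `a ≠ b`, and every
finite path in `Q` from `a` to `b` avoiding the edge `{a,b}` has minimax step length
strictly greater than `‖a−b‖`. -/
def MSFEdge {d : ℕ} (Q : Set (EuclideanSpace ℝ (Fin d)))
    (a b : EuclideanSpace ℝ (Fin d)) : Prop :=
  a ∈ Q ∧ b ∈ Q ∧ a ≠ b ∧
    ∀ p, IsPathIn Q p a b → AvoidsEdge p a b → ‖a - b‖ < CInf p

lemma foldr_max_le_aux (l : List ℝ) {M : ℝ} (h0 : 0 ≤ M) (h : ∀ x ∈ l, x ≤ M) :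
    l.foldr max 0 ≤ M := by
  induction l with
  | nil => simpa
  | cons a t ih =>
    simp only [List.foldr_cons, max_le_iff]
    exact ⟨h a (by simp), ih fun x hx => h x (by simp [hx])⟩

lemma avoids_of_nodup_aux {d : ℕ} (p : List (EuclideanSpace ℝ (Fin d)))
    (a b : EuclideanSpace ℝ (Fin d))
    (hnd : p.Nodup) (hh : p.head? = some a) (hl : p.getLast? = some b)
    (hlen : 3 ≤ p.length) : AvoidsEdge p a b := by
  have hne : p ≠ [] := by intro h; simp [h] at hlen
  have h0 : p[0]'(by omega) = a := by
    rw [List.head?_eq_head hne, ← List.getElem_zero (by omega)] at hh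
    exact Option.some_injective _ hh
  have hLast : p[p.length - 1]'(by omega) = b := by
    rw [List.getLast?_eq_getLast hne, List.getLast_eq_getElem] at hl
    exact Option.some_injective _ hl
  intro i
  constructor
  · rintro ⟨ha, hb⟩
    rw [List.getElem?_eq_some_iff] at ha hb
    obtain ⟨hi, ha⟩ := ha
    obtain ⟨hi1, hb⟩ := hb
    have hi0 : i = 0 := hnd.getElem_inj_iff.mp (ha.trans h0.symm)
    have hiL : i + 1 = p.length - 1 := hnd.getElem_inj_iff.mp (hb.trans hLast.symm)
    omega
  · rintro ⟨hb, ha⟩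
    rw [List.getElem?_eq_some_iff] at hb ha
    obtain ⟨hi, hb⟩ := hb
    obtain ⟨hi1, _⟩ := ha
    have hiL : i = p.length - 1 := hnd.getElem_inj_iff.mp (hb.trans hLast.symm)
    omega

lemma getElem_idx_aux {α : Type*} (l : List α) {i j : ℕ} (hi : i < l.length)
    (hj : j < l.length) (h : i = j) : l[i] = l[j] := by subst h; rfl

/-- for a locally finite point set in general position (all pairwise
distances distinct), the graph `R_∞` contains no cycles. -/
theorem stmt2 {d : ℕ} (Q : Set (EuclideanSpace ℝ (Fin d)))
    (hloc : ∀ (x : EuclideanSpace ℝ (Fin d)) (r : ℝ), (Q ∩ Metric.closedBall x r).Finite)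
    (hdist : ∀ a ∈ Q, ∀ b ∈ Q, ∀ a' ∈ Q, ∀ b' ∈ Q, a ≠ b → a' ≠ b' →
      ({a, b} : Set (EuclideanSpace ℝ (Fin d))) ≠ {a', b'} → ‖a - b‖ ≠ ‖a' - b'‖) :
    ¬ ∃ c : List (EuclideanSpace ℝ (Fin d)),
        4 ≤ c.length ∧ c.head? = c.getLast? ∧ c.dropLast.Nodup ∧
        List.Chain' (MSFEdge Q) c := by
  rintro ⟨v, hL, hcyc, hnd, hch⟩
  have hne : v ≠ [] := by intro h; rw [h] at hL; simp at hL
  -- the cycle closes up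
  have hclose : v[v.length - 1]'(by omega) = v[0]'(by omega) := by
    rw [List.head?_eq_head hne, ← List.getElem_zero (by omega),
      List.getLast?_eq_getLast hne, List.getLast_eq_getElem] at hcyc
    exact (Option.some_injective _ hcyc).symm
  -- the edges of the cycle
  have hchain : ∀ i, (h : i + 1 < v.length) → MSFEdge Q (v[i]'(by omega)) (v[i+1]'h) := by
    intro i h
    have := List.isChain_iff_getElem.mp hch i (by omega)
    simpa using this
  -- all vertices are in Q
  have hQ : ∀ i, (h : i < v.length) → v[i] ∈ Q := by
    intro i h
    rcases lt_or_eq_of_le (Nat.le_sub_one_of_lt h) with h' | h'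
    · exact (hchain i (by omega)).1
    · have : v[i] = v[0]'(by omega) := getElem_idx_aux v _ _ h' |>.trans hclose
      rw [this]
      exact (hchain 0 (by omega)).1
  -- the first L-1 vertices are pairwise distinct
  have hndE : ∀ i j, (hi : i < v.length - 1) → (hj : j < v.length - 1) →
      v[i]'(by omega) = v[j]'(by omega) → i = j := by
    intro i j hi hj he
    have hlen : v.dropLast.length = v.length - 1 := by simp
    have h1 : v.dropLast[i]'(by omega) = v[i]'(by omega) := List.getElem_dropLast ..
    have h2 : v.dropLast[j]'(by omega) = v[j]'(by omega) := List.getElem_dropLast ..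
    exact hnd.getElem_inj_iff.mp (by rw [h1, h2, he])
  -- edge lengths as a total function
  set f : ℕ → ℝ := fun i => ‖v.getD i 0 - v.getD (i+1) 0‖ with hf
  have hfval : ∀ i, (h : i + 1 < v.length) → f i = ‖(v[i]'(by omega)) - v[i+1]‖ := by
    intro i h
    simp only [hf, List.getD_eq_getElem v 0 (show i < v.length by omega),
      List.getD_eq_getElem v 0 h]
  -- pick a longest edge
  obtain ⟨j0, hj0mem, hj0max⟩ := Finset.exists_max_image (Finset.range (v.length - 1)) f
    ⟨0, Finset.mem_range.mpr (by omega)⟩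
  rw [Finset.mem_range] at hj0mem
  have hj0 : j0 + 1 < v.length := by omega
  set a := v[j0]'(by omega) with ha
  set b := v[j0+1]'hj0 with hb
  have hedge : MSFEdge Q a b := hchain j0 hj0
  -- the detour path, going around the cycle the other way
  set σ : ℕ → ℕ := fun k => if k ≤ j0 then j0 - k else v.length - 1 + j0 - k with hσ
  have hσlt : ∀ k, k < v.length - 1 → σ k < v.length - 1 := by
    intro k hk
    simp only [hσ]
    split_ifs <;> omega
  set p : List (EuclideanSpace ℝ (Fin d)) :=
    List.ofFn (fun k : Fin (v.length - 1) =>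
      v[σ k.val]'(by have := hσlt k.val k.isLt; omega)) with hp
  have hplen : p.length = v.length - 1 := by simp [hp]
  have hpget : ∀ k, (hk : k < v.length - 1) →
      p[k]'(by omega) = v[σ k]'(by have := hσlt k hk; omega) := by
    intro k hk
    simp only [hp]
    exact List.getElem_ofFn ..
  have hpne : p ≠ [] := by
    intro h
    rw [h] at hplen; simp at hplen; omega
  -- p has no duplicates
  have hpnd : p.Nodup := by
    rw [hp, List.nodup_ofFn]
    intro k k' he
    have hk := k.isLt
    have hk' := k'.isLt
    have hσe : σ k.val = σ k'.val :=
      hndE _ _ (hσlt _ hk) (hσlt _ hk') he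
    have : k.val = k'.val := by
      simp only [hσ] at hσe
      split_ifs at hσe <;> omega
    exact Fin.ext this
  -- p starts at a
  have hphead : p.head? = some a := by
    rw [List.head?_eq_head hpne, ← List.getElem_zero (by omega), hpget 0 (by omega)]
    have h0 : σ 0 = j0 := by simp [hσ]
    rw [ha]
    exact congrArg some (getElem_idx_aux v _ _ h0)
  -- p ends at b
  have hplast : p.getLast? = some b := by
    rw [List.getLast?_eq_getLast hpne, List.getLast_eq_getElem]
    have hlast : p[p.length - 1]'(by omega)
        = v[σ (p.length - 1)]'(by have := hσlt (p.length - 1) (by omega); omega) :=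
      hpget (p.length - 1) (by omega)
    rw [hlast, hb]
    refine congrArg some ?_
    rcases lt_or_eq_of_le (Nat.le_sub_one_of_lt (show j0 + 1 ≤ v.length - 1 by omega))
      with h' | h'
    · -- j0 + 1 < v.length - 1
      have hσv : σ (p.length - 1) = j0 + 1 := by
        simp only [hσ]; split_ifs <;> omega
      exact getElem_idx_aux v _ _ hσv
    · -- j0 + 1 = v.length - 1
      have hσv : σ (p.length - 1) = 0 := by
        simp only [hσ]; split_ifs <;> omega
      calc v[σ (p.length - 1)]'(by have := hσlt (p.length - 1) (by omega); omega)
          = v[0]'(by omega) := getElem_idx_aux v _ _ hσv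
        _ = v[v.length - 1]'(by omega) := hclose.symm
        _ = v[j0+1]'hj0 := getElem_idx_aux v _ _ (by omega)
  have hpath : IsPathIn Q p a b := by
    refine ⟨?_, hphead, hplast⟩
    intro x hx
    rw [hp, List.mem_ofFn] at hx
    obtain ⟨k, rfl⟩ := hx
    exact hQ _ _
  have havoid : AvoidsEdge p a b :=
    avoids_of_nodup_aux p a b hpnd hphead hplast (by omega)
  have hlt : ‖a - b‖ < CInf p := hedge.2.2.2 p hpath havoid
  -- but every step of p is at most ‖a - b‖
  have hle : CInf p ≤ ‖a - b‖ := by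
    have hab : ‖a - b‖ = f j0 := by rw [ha, hb]; exact (hfval j0 hj0).symm
    rw [CInf, hab]
    apply foldr_max_le_aux _ (by rw [← hab]; exact norm_nonneg _)
    intro x hx
    rw [List.mem_iff_getElem] at hx
    obtain ⟨k, hk, hxe⟩ := hx
    have hk' : k < v.length - 2 := by
      simp only [List.length_zipWith, List.length_tail, hplen] at hk
      omega
    have hk0 : σ k < v.length - 1 := hσlt _ (by omega)
    have hk1 : σ (k+1) < v.length - 1 := hσlt _ (by omega)
    have hstep : x = ‖(v[σ k]'(by omega)) - v[σ (k+1)]'(by omega)‖ := by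
      rw [← hxe, List.getElem_zipWith, List.getElem_tail,
        hpget k (by omega), hpget (k+1) (by omega)]
    -- identify the step with an edge of the cycle (reversed)
    have key : ∃ m : ℕ, ∃ hm : m + 1 < v.length,
        (v[σ k]'(by omega) = v[m+1]'hm) ∧ v[σ (k+1)]'(by omega) = v[m]'(by omega) := by
      rcases lt_trichotomy k j0 with hkj | hkj | hkj
      · -- going down towards v[0] : step is edge j0-k-1, reversed
        have h1 : σ k = j0 - k := by simp only [hσ]; split_ifs <;> omega
        have h2 : σ (k+1) = j0 - k - 1 := by simp only [hσ]; split_ifs <;> omega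
        exact ⟨j0 - k - 1, by omega, getElem_idx_aux v _ _ (by omega),
          getElem_idx_aux v _ _ (by omega)⟩
      · -- the junction step from v[0] = v[L-1] to v[L-2]
        have h1 : σ k = 0 := by simp only [hσ]; split_ifs <;> omega
        have h2 : σ (k+1) = v.length - 2 := by simp only [hσ]; split_ifs <;> omega
        refine ⟨v.length - 2, by omega, ?_, getElem_idx_aux v _ _ (by omega)⟩
        calc v[σ k]'(by omega) = v[0]'(by omega) := getElem_idx_aux v _ _ h1
          _ = v[v.length - 1]'(by omega) := hclose.symm
          _ = v[(v.length - 2) + 1]'(by omega) := getElem_idx_aux v _ _ (by omega)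
      · -- going down from v[L-2] towards v[j0+1]
        have h1 : σ k = v.length - 1 + j0 - k := by simp only [hσ]; split_ifs <;> omega
        have h2 : σ (k+1) = v.length - 1 + j0 - k - 1 := by
          simp only [hσ]; split_ifs <;> omega
        exact ⟨v.length - 2 + j0 - k, by omega, getElem_idx_aux v _ _ (by omega),
          getElem_idx_aux v _ _ (by omega)⟩
    obtain ⟨m, hm, e1, e2⟩ := key
    rw [hstep, e1, e2, norm_sub_rev, ← hfval m hm]
    exact hj0max m (Finset.mem_range.mpr (by omega))
  exact absurd hlt (not_lt.mpr hle)
end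

section
/- Let d ≥ 2 and 0 < δ < 1/4. Suppose (q_i)_{i≥1} is a sequence of distinct points in ℝ^d with |q_i| → ∞ such that for all sufficiently large j: |q_{j+1} − q_j| ≤ |q_j|^{3/4}, and Dist(q_k, segment[0, q_j]) ≤ |q_j|^{1−δ} for all 1 ≤ k < j. Then there exist a constant C and an index k* such that the angle θ(q_k, q_j) ≤ C |q_k|^{−δ} whenever k* ≤ k < j. -/
open Filter

open Real

variable {E : Type*} [NormedAddCommGroup E] [NormedSpace ℝ E]

/-- Comparing normalized directions of two nearby vectors. -/
lemma dir_dist (x w : E) (hx : x ≠ 0) (hw : w ≠ 0) :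
    ‖‖x‖⁻¹ • x - ‖w‖⁻¹ • w‖ ≤ 2 * ‖x - w‖ / ‖x‖ := by
  have ha : (0:ℝ) < ‖x‖ := norm_pos_iff.mpr hx
  have hb : (0:ℝ) < ‖w‖ := norm_pos_iff.mpr hw
  have key : ‖x‖⁻¹ • x - ‖w‖⁻¹ • w = ‖x‖⁻¹ • (x - w) + (‖x‖⁻¹ - ‖w‖⁻¹) • w := by
    rw [smul_sub, sub_smul]; abel
  rw [key]
  refine (norm_add_le _ _).trans ?_
  have h1 : ‖‖x‖⁻¹ • (x - w)‖ = ‖x - w‖ / ‖x‖ := by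
    rw [norm_smul, Real.norm_eq_abs, abs_of_pos (inv_pos.mpr ha)]
    field_simp
  have h2 : ‖(‖x‖⁻¹ - ‖w‖⁻¹) • w‖ ≤ ‖x - w‖ / ‖x‖ := by
    rw [norm_smul, Real.norm_eq_abs]
    have heq : ‖x‖⁻¹ - ‖w‖⁻¹ = (‖w‖ - ‖x‖) / (‖x‖ * ‖w‖) := by field_simp
    rw [heq, abs_div, abs_of_pos (mul_pos ha hb)]
    have habs : |‖w‖ - ‖x‖| ≤ ‖x - w‖ := by
      rw [show x - w = -(w - x) by abel, norm_neg]
      exact abs_norm_sub_norm_le w x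
    rw [div_mul_eq_mul_div, div_le_div_iff₀ (mul_pos ha hb) ha]
    calc |‖w‖ - ‖x‖| * ‖w‖ * ‖x‖ ≤ ‖x - w‖ * ‖w‖ * ‖x‖ := by
          gcongr
      _ = ‖x - w‖ * (‖x‖ * ‖w‖) := by ring
  rw [h1, mul_div_assoc]
  linarith

/-- If `x` is within `D < ‖x‖` of the segment `[0, y]`, then the directions of `x` and `y`
are `2D/‖x‖`-close. -/
lemma close_dir (x y : E) (D : ℝ)
    (h1 : Metric.infDist x (segment ℝ 0 y) ≤ D) (h2 : D < ‖x‖) :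
    y ≠ 0 ∧ ‖‖x‖⁻¹ • x - ‖y‖⁻¹ • y‖ ≤ 2 * D / ‖x‖ := by
  have hD0 : 0 ≤ D := le_trans Metric.infDist_nonneg h1
  have hx : (0:ℝ) < ‖x‖ := lt_of_le_of_lt hD0 h2
  have hxne : x ≠ 0 := by intro h; rw [h, norm_zero] at hx; exact lt_irrefl _ hx
  have hcomp : IsCompact (segment ℝ (0:E) y) := by
    rw [segment_eq_image]
    exact isCompact_Icc.image (by continuity)
  obtain ⟨z, hzmem, hzd⟩ := hcomp.exists_infDist_eq_dist ⟨0, left_mem_segment ℝ 0 y⟩ x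
  have hdz : ‖x - z‖ ≤ D := by
    rw [← dist_eq_norm, ← hzd]; exact h1
  rw [segment_eq_image] at hzmem
  obtain ⟨t, ht, hz⟩ := hzmem
  simp only [smul_zero, zero_add] at hz
  -- z = t • y
  have hzy : z = t • y := hz.symm
  have hznorm : 0 < ‖z‖ := by
    have := norm_sub_norm_le x z
    linarith [le_trans this hdz]
  have hzne : z ≠ 0 := norm_pos_iff.mp hznorm
  have ht0 : 0 < t := by
    rcases lt_or_eq_of_le ht.1 with h | h
    · exact h
    · exfalso; apply hzne; rw [hzy, ← h, zero_smul]
  have hyne : y ≠ 0 := by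
    intro h; apply hzne; rw [hzy, h, smul_zero]
  refine ⟨hyne, ?_⟩
  have hyn : (0:ℝ) < ‖y‖ := norm_pos_iff.mpr hyne
  have huz : ‖z‖⁻¹ • z = ‖y‖⁻¹ • y := by
    rw [hzy, norm_smul, Real.norm_eq_abs, abs_of_pos ht0, smul_smul]
    congr 1
    field_simp
  calc ‖‖x‖⁻¹ • x - ‖y‖⁻¹ • y‖ = ‖‖x‖⁻¹ • x - ‖z‖⁻¹ • z‖ := by rw [huz]
    _ ≤ 2 * ‖x - z‖ / ‖x‖ := dir_dist x z hxne hzne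
    _ ≤ 2 * D / ‖x‖ := by gcongr

open InnerProductGeometry in
/-- The angle is controlled by the chord distance between normalized vectors. -/
lemma angle_le_chord {F : Type*} [NormedAddCommGroup F] [InnerProductSpace ℝ F]
    (x y : F) (hx : x ≠ 0) (hy : y ≠ 0) :
    angle x y ≤ π / 2 * ‖‖x‖⁻¹ • x - ‖y‖⁻¹ • y‖ := by
  have hxn : (0:ℝ) < ‖x‖ := norm_pos_iff.mpr hx
  have hyn : (0:ℝ) < ‖y‖ := norm_pos_iff.mpr hy
  set u := ‖x‖⁻¹ • x with hu
  set v := ‖y‖⁻¹ • y with hv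
  have hun : ‖u‖ = 1 := norm_smul_inv_norm hx
  have hvn : ‖v‖ = 1 := norm_smul_inv_norm hy
  have hang : angle u v = angle x y := by
    rw [hu, hv, angle_smul_left_of_pos _ _ (inv_pos.mpr hxn),
      angle_smul_right_of_pos _ _ (inv_pos.mpr hyn)]
  set θ := angle x y with hθ
  have hθ0 : 0 ≤ θ := angle_nonneg x y
  have hθπ : θ ≤ π := angle_le_pi x y
  have hcos : Real.cos θ = (inner ℝ u v : ℝ) := by
    rw [← hang, cos_angle, hun, hvn]; norm_num
  have hN2 : ‖u - v‖ ^ 2 = 2 - 2 * Real.cos θ := by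
    rw [norm_sub_sq_real, hun, hvn, hcos]; ring
  have hcoshalf : Real.cos θ = 1 - 2 * Real.sin (θ / 2) ^ 2 := by
    have h2 := Real.cos_two_mul (θ / 2)
    rw [show 2 * (θ / 2) = θ by ring] at h2
    nlinarith [Real.sin_sq_add_cos_sq (θ / 2)]
  have hsin0 : 0 ≤ Real.sin (θ / 2) :=
    Real.sin_nonneg_of_nonneg_of_le_pi (by linarith) (by linarith)
  have hNe : ‖u - v‖ = 2 * Real.sin (θ / 2) := by
    have h1 : ‖u - v‖ ^ 2 = (2 * Real.sin (θ / 2)) ^ 2 := by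
      rw [hN2, hcoshalf]; ring
    calc ‖u - v‖ = Real.sqrt (‖u - v‖ ^ 2) := (Real.sqrt_sq (norm_nonneg _)).symm
      _ = Real.sqrt ((2 * Real.sin (θ / 2)) ^ 2) := by rw [h1]
      _ = 2 * Real.sin (θ / 2) := Real.sqrt_sq (by linarith)
  have hJ : 2 / π * (θ / 2) ≤ Real.sin (θ / 2) :=
    Real.mul_le_sin (by linarith) (by linarith)
  have hπ : 0 < π := Real.pi_pos
  rw [hNe]
  have h2 : θ ≤ π * Real.sin (θ / 2) := by
    rw [div_mul_eq_mul_div, div_le_iff₀ hπ] at hJ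
    nlinarith
  nlinarith

set_option maxHeartbeats 1600000 in

/-- Lemma 2.7: a sequence with controlled step sizes that stays close to
the segments `[0, q_j]` has angles `θ(q_k, q_j)` bounded by `C|q_k|^{−δ}`. -/
theorem stmt3 {d : ℕ} (hd : 2 ≤ d) {δ : ℝ} (hδ0 : 0 < δ) (hδ : δ < 1 / 4)
    (q : ℕ → EuclideanSpace ℝ (Fin d)) (hinj : Function.Injective q)
    (hnorm : Tendsto (fun i => ‖q i‖) atTop atTop)
    (hJ : ∃ J : ℕ, ∀ j ≥ J,
      ‖q (j + 1) - q j‖ ≤ ‖q j‖ ^ ((3 : ℝ) / 4) ∧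
      ∀ k, 1 ≤ k → k < j →
        Metric.infDist (q k) (segment ℝ 0 (q j)) ≤ ‖q j‖ ^ (1 - δ)) :
    ∃ C > 0, ∃ k₀ : ℕ, ∀ k j, k₀ ≤ k → k < j →
      InnerProductGeometry.angle (q k) (q j) ≤ C * ‖q k‖ ^ (-δ) := by
  classical
  obtain ⟨J, hJ⟩ := hJ
  obtain ⟨M, hM⟩ : ∃ M : ℝ, M = max 8 ((4:ℝ) ^ ((1:ℝ)/δ)) := ⟨_, rfl⟩
  have hM8 : (8:ℝ) ≤ M := hM ▸ le_max_left _ _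
  have hM4 : (4:ℝ) ^ ((1:ℝ)/δ) ≤ M := hM ▸ le_max_right _ _
  obtain ⟨N, hN⟩ := Filter.eventually_atTop.mp (hnorm.eventually_ge_atTop M)
  obtain ⟨k₀, hk₀def⟩ : ∃ k₀ : ℕ, k₀ = max (max J 1) N := ⟨_, rfl⟩
  have hk₀J : J ≤ k₀ := hk₀def ▸ le_trans (le_max_left _ _) (le_max_left _ _)
  have hk₀1 : 1 ≤ k₀ := hk₀def ▸ le_trans (le_max_right _ _) (le_max_left _ _)
  have hk₀N : N ≤ k₀ := hk₀def ▸ le_max_right _ _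
  obtain ⟨c, hc⟩ : ∃ c : ℝ, c = (2:ℝ) ^ (-δ) := ⟨_, rfl⟩
  have hc0 : 0 < c := hc ▸ Real.rpow_pos_of_pos (by norm_num) _
  have hc1 : c < 1 := hc ▸ Real.rpow_lt_one_of_one_lt_of_neg (by norm_num) (by linarith)
  obtain ⟨B, hB⟩ : ∃ B : ℝ, B = 6 / (1 - c) := ⟨_, rfl⟩
  have hBpos : 0 < B := hB ▸ div_pos (by norm_num) (by linarith)
  have hB1 : B * (1 - c) = 6 := by
    rw [hB, div_mul_cancel₀ _ (by linarith : (1:ℝ) - c ≠ 0)]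
  have hB6 : 6 ≤ B := by nlinarith
  have hBc : 6 + B * c = B := by nlinarith
  -- the key chord-distance estimate, by induction on an upper bound for j - k
  have key : ∀ n : ℕ, ∀ k j : ℕ, k₀ ≤ k → k < j → j ≤ k + n →
      q j ≠ 0 ∧ ‖(‖q k‖⁻¹ • q k) - (‖q j‖⁻¹ • q j)‖ ≤ B * ‖q k‖ ^ (-δ) := by
    intro n
    induction n with
    | zero => intro k j _ h1 h2; omega
    | succ n IH =>
      intro k j hk hkj hjn
      obtain ⟨R, hRdef⟩ : ∃ R : ℝ, R = ‖q k‖ := ⟨_, rfl⟩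
      have hRM : M ≤ R := hRdef ▸ hN k (le_trans hk₀N hk)
      have hR8 : (8:ℝ) ≤ R := le_trans hM8 hRM
      have hR4 : (4:ℝ) ^ ((1:ℝ)/δ) ≤ R := le_trans hM4 hRM
      have hRpos : (0:ℝ) < R := by linarith
      have hRδ4 : (4:ℝ) ≤ R ^ δ := by
        have h0 : (0:ℝ) ≤ (4:ℝ) ^ ((1:ℝ)/δ) := Real.rpow_nonneg (by norm_num) _
        have h := Real.rpow_le_rpow h0 hR4 hδ0.le
        rwa [← Real.rpow_mul (by norm_num : (0:ℝ) ≤ 4), one_div,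
          inv_mul_cancel₀ (ne_of_gt hδ0), Real.rpow_one] at h
      have hs_pos : 0 < R ^ (-δ) := Real.rpow_pos_of_pos hRpos _
      have hmul : R ^ δ * R ^ (-δ) = 1 := by
        rw [← Real.rpow_add hRpos]; simp
      have hs4 : R ^ (-δ) ≤ 1/4 := by nlinarith [mul_le_mul_of_nonneg_right hRδ4 hs_pos.le]
      have hR1δ : R ^ (1-δ) = R * R ^ (-δ) := by
        rw [show (1:ℝ) - δ = 1 + -δ by ring, Real.rpow_add hRpos, Real.rpow_one]
      have hk1 : 1 ≤ k := le_trans hk₀1 hk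
      have hkJ : J ≤ k := le_trans hk₀J hk
      -- one-step estimate
      have step : ∀ i, k < i → ∀ cc : ℝ, 1 ≤ cc → cc ≤ 3 → ‖q i‖ ≤ cc * R →
          q i ≠ 0 ∧ ‖(‖q k‖⁻¹ • q k) - (‖q i‖⁻¹ • q i)‖ ≤ 2 * cc * R ^ (-δ) := by
        intro i hki cc hcc1 hcc3 hqi
        have hinf := (hJ i (by omega)).2 k hk1 hki
        have hDle : ‖q i‖ ^ (1-δ) ≤ cc * (R * R ^ (-δ)) := by
          calc ‖q i‖ ^ (1-δ) ≤ (cc * R) ^ (1-δ) :=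
                Real.rpow_le_rpow (norm_nonneg _) hqi (by linarith)
            _ = cc ^ (1-δ) * R ^ (1-δ) := Real.mul_rpow (by linarith) hRpos.le
            _ ≤ cc * R ^ (1-δ) := by
                have h := Real.rpow_le_rpow_of_exponent_le hcc1 (show (1:ℝ)-δ ≤ 1 by linarith)
                rw [Real.rpow_one] at h
                exact mul_le_mul_of_nonneg_right h (Real.rpow_nonneg hRpos.le _)
            _ = cc * (R * R ^ (-δ)) := by rw [hR1δ]
        have hDlt : ‖q i‖ ^ (1-δ) < ‖q k‖ := by
          rw [← hRdef]
          have h1 : R * R ^ (-δ) ≤ R * (1/4) := mul_le_mul_of_nonneg_left hs4 hRpos.le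
          have h2 : cc * (R * R ^ (-δ)) ≤ 3 * (R * (1/4)) :=
            mul_le_mul hcc3 h1 (by positivity) (by norm_num)
          calc ‖q i‖ ^ (1-δ) ≤ cc * (R * R ^ (-δ)) := hDle
            _ ≤ 3 * (R * (1/4)) := h2
            _ < R := by linarith
        obtain ⟨hiy, hile⟩ := close_dir (q k) (q i) (‖q i‖ ^ (1-δ)) hinf hDlt
        refine ⟨hiy, hile.trans ?_⟩
        rw [← hRdef, div_le_iff₀ hRpos]
        nlinarith [hDle]
      -- first index past level 2R
      have hex : ∃ j', k < j' ∧ 2 * R ≤ ‖q j'‖ := by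
        obtain ⟨N2, hN2⟩ := Filter.eventually_atTop.mp (hnorm.eventually_ge_atTop (2 * R))
        exact ⟨max N2 (k+1), by omega, hN2 _ (le_max_left _ _)⟩
      obtain ⟨m, hm1, hm2, hmlt⟩ : ∃ m, k < m ∧ 2 * R ≤ ‖q m‖ ∧
          ∀ i, k < i → i < m → ‖q i‖ < 2 * R := by
        refine ⟨Nat.find hex, (Nat.find_spec hex).1, (Nat.find_spec hex).2, ?_⟩
        intro i hki him
        by_contra h
        exact Nat.find_min hex him ⟨hki, by linarith⟩
      -- bound ‖q m‖ ≤ 3R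
      have hm3 : ‖q m‖ ≤ 3 * R := by
        obtain ⟨p, hpm⟩ : ∃ p, m = p + 1 := ⟨m - 1, by omega⟩
        have hp2R : ‖q p‖ ≤ 2 * R := by
          rcases eq_or_lt_of_le (show k ≤ p by omega) with h | h
          · rw [← h]; linarith
          · exact (hmlt p h (by omega)).le
        have hstep := (hJ p (by omega)).1
        have h34 : ‖q p‖ ^ ((3:ℝ)/4) ≤ R := by
          have hb : (0:ℝ) ≤ 2 * R := by linarith
          have h4 : (0:ℝ) ≤ (2*R) ^ ((3:ℝ)/4) := Real.rpow_nonneg hb _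
          have h1 : ‖q p‖ ^ ((3:ℝ)/4) ≤ (2*R) ^ ((3:ℝ)/4) :=
            Real.rpow_le_rpow (norm_nonneg _) hp2R (by norm_num)
          have h2 : ((2*R) ^ ((3:ℝ)/4)) ^ (4:ℕ) = (2*R) ^ (3:ℕ) := by
            rw [← Real.rpow_natCast ((2*R) ^ ((3:ℝ)/4)) 4, ← Real.rpow_mul hb,
              ← Real.rpow_natCast (2*R) 3]
            norm_num
          have h3 : ((2*R) ^ ((3:ℝ)/4)) ^ (4:ℕ) ≤ R ^ (4:ℕ) := by
            rw [h2]
            nlinarith [mul_le_mul_of_nonneg_right hR8 (pow_nonneg hRpos.le 3)]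
          have h5 : (2*R) ^ ((3:ℝ)/4) ≤ R :=
            (pow_le_pow_iff_left₀ h4 hRpos.le (by norm_num)).mp h3
          linarith
        have hle : ‖q (p+1)‖ ≤ ‖q p‖ + ‖q (p+1) - q p‖ := by
          calc ‖q (p+1)‖ = ‖q p + (q (p+1) - q p)‖ := by congr 1; abel
            _ ≤ ‖q p‖ + ‖q (p+1) - q p‖ := norm_add_le _ _
        rw [hpm]
        linarith
      rcases lt_trichotomy j m with hjm | hjm | hjm
      · -- j < m : ‖q j‖ < 2R
        have h2R : ‖q j‖ ≤ 2 * R := (hmlt j hkj hjm).le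
        obtain ⟨h0, hle⟩ := step j hkj 2 (by norm_num) (by norm_num) h2R
        have hfin : 2 * 2 * R ^ (-δ) ≤ B * ‖q k‖ ^ (-δ) := by
          rw [← hRdef]; nlinarith
        exact ⟨h0, hle.trans hfin⟩
      · -- j = m
        have h3R : ‖q j‖ ≤ 3 * R := by rw [hjm]; exact hm3
        obtain ⟨h0, hle⟩ := step j hkj 3 (by norm_num) (by norm_num) h3R
        have hfin : 2 * 3 * R ^ (-δ) ≤ B * ‖q k‖ ^ (-δ) := by
          rw [← hRdef]; nlinarith
        exact ⟨h0, hle.trans hfin⟩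
      · -- j > m : chain through m
        obtain ⟨hm0, hkm⟩ := step m hm1 3 (by norm_num) (by norm_num) hm3
        obtain ⟨hj0, hmj⟩ := IH m j (le_trans hk hm1.le) hjm (by omega)
        refine ⟨hj0, ?_⟩
        have htri : ‖(‖q k‖⁻¹ • q k) - (‖q j‖⁻¹ • q j)‖ ≤
            ‖(‖q k‖⁻¹ • q k) - (‖q m‖⁻¹ • q m)‖ + ‖(‖q m‖⁻¹ • q m) - (‖q j‖⁻¹ • q j)‖ := by
          have h := norm_add_le ((‖q k‖⁻¹ • q k) - (‖q m‖⁻¹ • q m))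
            ((‖q m‖⁻¹ • q m) - (‖q j‖⁻¹ • q j))
          rw [sub_add_sub_cancel] at h
          exact h
        have hmR : ‖q m‖ ^ (-δ) ≤ c * R ^ (-δ) := by
          have h2Rpos : (0:ℝ) < 2 * R := by linarith
          have h1 : (2*R) ^ δ ≤ ‖q m‖ ^ δ :=
            Real.rpow_le_rpow h2Rpos.le hm2 hδ0.le
          have h2 : ‖q m‖ ^ (-δ) ≤ (2*R) ^ (-δ) := by
            rw [Real.rpow_neg (norm_nonneg _), Real.rpow_neg h2Rpos.le]
            exact inv_anti₀ (Real.rpow_pos_of_pos h2Rpos _) h1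
          have h3 : (2*R) ^ (-δ) = c * R ^ (-δ) := by
            rw [hc, ← Real.mul_rpow (by norm_num) hRpos.le]
          rw [← h3]; exact h2
        have hBm : B * ‖q m‖ ^ (-δ) ≤ B * (c * R ^ (-δ)) :=
          mul_le_mul_of_nonneg_left hmR hBpos.le
        have hfin : ‖(‖q k‖⁻¹ • q k) - (‖q j‖⁻¹ • q j)‖ ≤ B * R ^ (-δ) := by
          calc ‖(‖q k‖⁻¹ • q k) - (‖q j‖⁻¹ • q j)‖
              ≤ 2 * 3 * R ^ (-δ) + B * ‖q m‖ ^ (-δ) := by linarith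
            _ ≤ 6 * R ^ (-δ) + B * (c * R ^ (-δ)) := by linarith
            _ = (6 + B * c) * R ^ (-δ) := by ring
            _ = B * R ^ (-δ) := by rw [hBc]
        rw [hRdef] at hfin
        exact hfin
  -- conclude
  refine ⟨2 * B, by positivity, k₀, ?_⟩
  intro k j hk hkj
  obtain ⟨hj0, hchord⟩ := key j k j hk hkj (by omega)
  have hk0 : q k ≠ 0 := by
    have hRM : M ≤ ‖q k‖ := hN k (le_trans hk₀N hk)
    have h : (0:ℝ) < ‖q k‖ := lt_of_lt_of_le (by linarith) hRM
    exact norm_pos_iff.mp h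
  have hang := angle_le_chord (q k) (q j) hk0 hj0
  have hs_pos : 0 < ‖q k‖ ^ (-δ) := Real.rpow_pos_of_pos (norm_pos_iff.mpr hk0) _
  have hπ4 : π ≤ 4 := Real.pi_le_four
  calc InnerProductGeometry.angle (q k) (q j)
      ≤ π / 2 * ‖(‖q k‖⁻¹ • q k) - (‖q j‖⁻¹ • q j)‖ := hang
    _ ≤ π / 2 * (B * ‖q k‖ ^ (-δ)) :=
        mul_le_mul_of_nonneg_left hchord (by positivity)
    _ ≤ 2 * (B * ‖q k‖ ^ (-δ)) :=
        mul_le_mul_of_nonneg_right (by linarith) (by positivity)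
    _ = 2 * B * ‖q k‖ ^ (-δ) := by ring
end

section
/- Let α > 1, d ≥ 1, and let C = min((α−1)/(2α), 2^{−1/α} − 2^{−1}, 2^{−1/α}(1+α)^{1/α} − 1). Then C > 0, and for any ℓ > 0, h > 0 and any point c ∈ ℝ^d whose first coordinate equals ℓ/2 and with |c − (ℓ/2)e₁| ≤ C·min(ℓ, h), one has φ(|c|) + φ(|c − ℓe₁|) ≤ φ(ℓ), where φ is the truncated-power cost function with parameters α and h. -/
/-- The truncated-power cost function: `φ(t) = t^α` for `t ≤ h`, extended linearly with
slope `α h^{α−1}` for `t > h`. -/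
noncomputable def truncPow (α h t : ℝ) : ℝ :=
  if t ≤ h then t ^ α else h ^ α + α * h ^ (α - 1) * (t - h)

open RealInnerProductSpace in
lemma pythag {d : ℕ} [NeZero d] (ℓ : ℝ) (hℓ : 0 < ℓ) (c : EuclideanSpace ℝ (Fin d))
    (hc0 : c 0 = ℓ / 2) :
    ‖c‖ = ‖c - ℓ • EuclideanSpace.single (0 : Fin d) (1 : ℝ)‖ ∧
    ‖c‖ ≤ ℓ / 2 + ‖c - (ℓ / 2) • EuclideanSpace.single (0 : Fin d) (1 : ℝ)‖ := by
  set e : EuclideanSpace ℝ (Fin d) := EuclideanSpace.single (0 : Fin d) (1 : ℝ) with he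
  set w : EuclideanSpace ℝ (Fin d) := c - (ℓ / 2) • e with hw
  have hip : (inner ℝ e w : ℝ) = 0 := by
    rw [he, EuclideanSpace.inner_single_left]
    have : w 0 = 0 := by
      rw [hw, he]
      simp [EuclideanSpace.single_apply, hc0]
    simp [this]
  have hne : ‖e‖ = 1 := by rw [he, EuclideanSpace.norm_single]; norm_num
  have hsq1 : ‖c‖ ^ 2 = (ℓ / 2) ^ 2 + ‖w‖ ^ 2 := by
    have hc : c = (ℓ / 2) • e + w := by rw [hw]; abel
    rw [hc, norm_add_sq_real, real_inner_smul_left, hip, norm_smul]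
    simp [hne, abs_of_pos hℓ]
  have hsq2 : ‖c - ℓ • e‖ ^ 2 = (ℓ / 2) ^ 2 + ‖w‖ ^ 2 := by
    have hc : c - ℓ • e = (-(ℓ / 2)) • e + w := by
      rw [hw]; rw [neg_smul]; module
    rw [hc, norm_add_sq_real, real_inner_smul_left, hip, norm_smul]
    simp [hne, abs_of_pos hℓ]
  constructor
  · have := hsq1.trans hsq2.symm
    have h1 := norm_nonneg c
    have h2 := norm_nonneg (c - ℓ • e)
    nlinarith
  · have h1 := norm_nonneg c
    have h2 := norm_nonneg w
    nlinarith [hsq1]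

lemma Cpos {α : ℝ} (hα : 1 < α) :
    0 < min ((α - 1) / (2 * α))
        (min ((2 : ℝ) ^ (-1 / α) - 2⁻¹) ((2 : ℝ) ^ (-1 / α) * (1 + α) ^ (1 / α) - 1)) := by
  have hα0 : (0:ℝ) < α := by linarith
  have h1 : (2:ℝ) ^ (-1/α) = ((2:ℝ)⁻¹) ^ (1/α) := by
    rw [show (-1/α) = (-1:ℝ)*(1/α) by ring, Real.rpow_mul (by norm_num), Real.rpow_neg_one]
  refine lt_min (div_pos (by linarith) (by linarith)) (lt_min ?_ ?_)
  · have : (2:ℝ)^(-1:ℝ) < (2:ℝ)^(-1/α) := by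
      apply Real.rpow_lt_rpow_left_iff (by norm_num : (1:ℝ) < 2) |>.mpr
      rw [neg_div]
      have : 1/α < 1 := by rw [div_lt_one hα0]; exact hα
      linarith
    rw [Real.rpow_neg_one] at this
    linarith
  · rw [h1, ← Real.mul_rpow (by norm_num) (by linarith)]
    have : (1:ℝ) < ((2:ℝ)⁻¹ * (1 + α)) ^ (1/α) := by
      rw [Real.one_lt_rpow_iff_of_pos (by linarith)]
      left
      exact ⟨by nlinarith, by positivity⟩
    linarith

lemma truncPow_mono {α h : ℝ} (hα : 1 ≤ α) (hh : 0 < h) {s t : ℝ} (hs : 0 ≤ s)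
    (hst : s ≤ t) : truncPow α h s ≤ truncPow α h t := by
  unfold truncPow
  have h0 : (0:ℝ) < α := by linarith
  have h3 : 0 < h ^ (α - 1) := Real.rpow_pos_of_pos hh _
  by_cases h1 : s ≤ h
  · by_cases h2 : t ≤ h
    · simp [h1, h2]
      exact Real.rpow_le_rpow hs hst h0.le
    · simp [h1, h2]
      push_neg at h2
      have hle : s ^ α ≤ h ^ α := Real.rpow_le_rpow hs h1 h0.le
      have := mul_nonneg (mul_nonneg h0.le h3.le) (by linarith : (0:ℝ) ≤ t - h)
      linarith
  · have h2 : ¬ t ≤ h := by push_neg at h1 ⊢; linarith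
    simp [h1, h2]
    have := mul_le_mul_of_nonneg_left (sub_le_sub_right hst h) (mul_nonneg h0.le h3.le)
    linarith

lemma interp_step {α h u t s₀ : ℝ} (hts : s₀ * h ≤ t) (h2 : t ≤ h)
    (hden : 0 < h - s₀ * h) (e1 : 0 ≤ α * (2 * (s₀ * h) - 2 * u - h))
    (e2 : h ≤ α * (h - 2 * u)) :
    (t - s₀ * h) * h ≤ α * (2 * t - 2 * u - h) * (h - s₀ * h) := by
  rcases le_or_gt 0 (2 * α * (h - s₀ * h) - h) with hk | hk
  · nlinarith [mul_nonneg e1 hden.le, mul_nonneg (sub_nonneg.mpr hts) hk]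
  · nlinarith [mul_nonneg hden.le (by linarith : (0:ℝ) ≤ α * (h - 2*u) - h),
      mul_nonneg (by linarith : (0:ℝ) ≤ h - t) (by linarith : (0:ℝ) ≤ h - 2 * α * (h - s₀ * h))]

lemma combine_step {T H X b : ℝ} (hconv : T ≤ (1 - b) * (2⁻¹ * H) + b * H)
    (hbb : b * H ≤ X) : 2 * T ≤ H + X := by nlinarith

lemma key {α : ℝ} (hα : 1 < α) {ℓ h u : ℝ} (hℓ : 0 < ℓ) (hh : 0 < h) (hu : 0 ≤ u)
    (hC : u ≤ min ((α - 1) / (2 * α))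
            (min ((2 : ℝ) ^ (-1 / α) - 2⁻¹)
              ((2 : ℝ) ^ (-1 / α) * (1 + α) ^ (1 / α) - 1)) * min ℓ h) :
    2 * truncPow α h (ℓ / 2 + u) ≤ truncPow α h ℓ := by
  have hα0 : (0:ℝ) < α := by linarith
  set s₀ : ℝ := (2:ℝ) ^ (-1/α) with hs₀
  have hs₀lt1 : s₀ < 1 := by
    apply Real.rpow_lt_one_of_one_lt_of_neg (by norm_num)
    rw [neg_div, neg_lt_zero]; positivity
  have hs₀pos : 0 < s₀ := Real.rpow_pos_of_pos (by norm_num) _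
  have hs₀α : s₀ ^ α = 2⁻¹ := by
    rw [hs₀, ← Real.rpow_mul (by norm_num), div_mul_cancel₀, Real.rpow_neg_one]
    exact hα0.ne'
  have hs₀half : (2:ℝ)⁻¹ < s₀ := by
    have h6 : (2:ℝ)^(-1:ℝ) < (2:ℝ)^(-1/α) := by
      apply Real.rpow_lt_rpow_left_iff (by norm_num : (1:ℝ) < 2) |>.mpr
      rw [neg_div]
      have : 1/α < 1 := by rw [div_lt_one hα0]; exact hα
      linarith
    rwa [Real.rpow_neg_one] at h6
  clear_value s₀
  have hmnn : 0 ≤ min ℓ h := le_min hℓ.le hh.le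
  have hu1 : u ≤ (α - 1) / (2 * α) * min ℓ h :=
    hC.trans (mul_le_mul_of_nonneg_right (min_le_left _ _) hmnn)
  have hu2 : u ≤ (s₀ - 2⁻¹) * min ℓ h :=
    hC.trans (mul_le_mul_of_nonneg_right
      ((min_le_right _ _).trans (min_le_left _ _)) hmnn)
  set t : ℝ := ℓ / 2 + u with ht
  have htpos : 0 < t := by positivity
  have ht2 : 2 * t = ℓ + 2 * u := by rw [ht]; ring
  clear_value t
  clear hs₀ ht hC
  have hhα1 : 0 < h ^ (α - 1) := Real.rpow_pos_of_pos hh _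
  have hhα : h ^ α = h ^ (α - 1) * h := by
    rw [← Real.rpow_add_one hh.ne' (α - 1)]; ring_nf
  by_cases hcase : ℓ ≤ h
  · -- easy case: everything below h
    have hum : u ≤ (s₀ - 2⁻¹) * ℓ := by
      calc u ≤ (s₀ - 2⁻¹) * min ℓ h := hu2
        _ ≤ (s₀ - 2⁻¹) * ℓ := by
            apply mul_le_mul_of_nonneg_left (min_le_left _ _); linarith
    have htℓ : t ≤ s₀ * ℓ := by linarith
    have htleh : t ≤ h := le_trans (htℓ.trans
      (by linarith [mul_le_mul_of_nonneg_right hs₀lt1.le hℓ.le] : s₀ * ℓ ≤ ℓ)) hcase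
    have Et : truncPow α h t = t ^ α := by rw [truncPow, if_pos htleh]
    have El : truncPow α h ℓ = ℓ ^ α := by rw [truncPow, if_pos hcase]
    rw [Et, El]
    have h1 : t ^ α ≤ (s₀ * ℓ) ^ α := Real.rpow_le_rpow htpos.le htℓ hα0.le
    rw [Real.mul_rpow hs₀pos.le hℓ.le, hs₀α] at h1
    have h2 : 0 < ℓ ^ α := Real.rpow_pos_of_pos hℓ _
    linarith
  · push_neg at hcase
    have hmin : min ℓ h = h := min_eq_right hcase.le
    rw [hmin] at hu1 hu2
    have El : truncPow α h ℓ = h ^ α + α * h ^ (α - 1) * (ℓ - h) := by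
      rw [truncPow, if_neg (not_le.mpr hcase)]
    rw [El]
    have hℓeq : ℓ = 2 * t - 2 * u := by linarith
    have e2 : h ≤ α * (h - 2 * u) := by
      have h5 : 2 * α * u ≤ (α - 1) * h := by
        rw [div_mul_eq_mul_div, le_div_iff₀ (by linarith)] at hu1; linarith
      nlinarith
    by_cases h2 : t ≤ h
    · rw [show truncPow α h t = t ^ α from by rw [truncPow, if_pos h2]]
      by_cases h3 : 2 * t ^ α ≤ h ^ α
      · have := mul_nonneg (mul_nonneg hα0.le hhα1.le)
          (sub_nonneg.mpr hcase.le)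
        linarith
      · push_neg at h3
        have hts : s₀ * h ≤ t := by
          by_contra hcon
          push_neg at hcon
          have h7 := Real.rpow_le_rpow htpos.le hcon.le hα0.le
          rw [Real.mul_rpow hs₀pos.le hh.le, hs₀α] at h7
          have h4 : 0 < h ^ α := Real.rpow_pos_of_pos hh _
          linarith
        have hden : 0 < h - s₀ * h := by
          have := mul_pos (by linarith : (0:ℝ) < 1 - s₀) hh
          linarith
        set a : ℝ := (h - t) / (h - s₀ * h) with ha
        set b : ℝ := (t - s₀ * h) / (h - s₀ * h) with hb
        have hab : a + b = 1 := by
          rw [ha, hb, ← add_div, div_eq_one_iff_eq hden.ne']; ring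
        have hanm : 0 ≤ a := div_nonneg (by linarith) hden.le
        have hbnm : 0 ≤ b := div_nonneg (by linarith) hden.le
        clear_value a b
        have hcomb : a * (s₀ * h) + b * h = t := by
          rw [ha, hb, div_mul_eq_mul_div, div_mul_eq_mul_div, ← add_div,
            div_eq_iff hden.ne']; ring
        have hconv := (convexOn_rpow hα.le).2
          (Set.mem_Ici.mpr (by positivity : (0:ℝ) ≤ s₀ * h))
          (Set.mem_Ici.mpr hh.le) hanm hbnm hab
        simp only [smul_eq_mul] at hconv
        rw [hcomb] at hconv
        have hsh : (s₀ * h) ^ α = 2⁻¹ * h ^ α := by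
          rw [Real.mul_rpow hs₀pos.le hh.le, hs₀α]
        rw [hsh] at hconv
        have ha' : a = 1 - b := by linarith
        rw [ha'] at hconv
        have hbbound : b * h ^ α ≤ α * h ^ (α - 1) * (ℓ - h) := by
          rw [hb, hhα, div_mul_eq_mul_div, div_le_iff₀ hden]
          have e1 : 0 ≤ α * (2 * (s₀ * h) - 2 * u - h) :=
            mul_nonneg hα0.le (by linarith)
          have key2 : (t - s₀ * h) * h ≤ α * (2 * t - 2 * u - h) * (h - s₀ * h) :=
            interp_step hts h2 hden e1 e2
          rw [hℓeq]
          linarith [mul_le_mul_of_nonneg_right key2 hhα1.le]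
        exact combine_step hconv hbbound
    · push_neg at h2
      rw [show truncPow α h t = h ^ α + α * h ^ (α - 1) * (t - h) from by
        rw [truncPow, if_neg (not_le.mpr h2)]]
      have h8 := mul_le_mul_of_nonneg_left e2 hhα1.le
      rw [hℓeq]
      linarith [h8, hhα]

/-- with `C = min((α−1)/(2α), 2^{−1/α} − 2^{−1}, 2^{−1/α}(1+α)^{1/α} − 1)`,
we have `C > 0`, and any point `c` on the bisecting hyperplane (first coordinate `ℓ/2`)
with `|c − (ℓ/2)e₁| ≤ C·min(ℓ,h)` lies in `W_φ(0, ℓe₁)`. -/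
theorem stmt11 {d : ℕ} [NeZero d] {α : ℝ} (hα : 1 < α) :
    0 < min ((α - 1) / (2 * α))
        (min ((2 : ℝ) ^ (-1 / α) - 2⁻¹) ((2 : ℝ) ^ (-1 / α) * (1 + α) ^ (1 / α) - 1)) ∧
    ∀ ℓ h : ℝ, 0 < ℓ → 0 < h →
      ∀ c : EuclideanSpace ℝ (Fin d), c 0 = ℓ / 2 →
        ‖c - (ℓ / 2) • EuclideanSpace.single (0 : Fin d) (1 : ℝ)‖ ≤
          min ((α - 1) / (2 * α))
            (min ((2 : ℝ) ^ (-1 / α) - 2⁻¹)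
              ((2 : ℝ) ^ (-1 / α) * (1 + α) ^ (1 / α) - 1)) * min ℓ h →
        truncPow α h ‖c‖ +
            truncPow α h ‖c - ℓ • EuclideanSpace.single (0 : Fin d) (1 : ℝ)‖ ≤
          truncPow α h ℓ := by
  refine ⟨Cpos hα, ?_⟩
  intro ℓ h hℓ hh c hc0 hnorm
  obtain ⟨heq, hle⟩ := pythag ℓ hℓ c hc0
  have hu : (0:ℝ) ≤ ‖c - (ℓ / 2) • EuclideanSpace.single (0 : Fin d) (1 : ℝ)‖ :=
    norm_nonneg _
  calc truncPow α h ‖c‖ +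
        truncPow α h ‖c - ℓ • EuclideanSpace.single (0 : Fin d) (1 : ℝ)‖
      = 2 * truncPow α h ‖c‖ := by rw [← heq]; ring
    _ ≤ 2 * truncPow α h
          (ℓ / 2 + ‖c - (ℓ / 2) • EuclideanSpace.single (0 : Fin d) (1 : ℝ)‖) := by
        linarith [truncPow_mono hα.le hh (norm_nonneg c) hle]
    _ ≤ truncPow α h ℓ := key hα hℓ hh hu hnorm
end

section
/- Fix α > 1 and h > 0 and let φ be the truncated-power cost function. For every E > 0 there exists h₀ > 0 such that whenever h > h₀ and a, b ∈ ℝ^d satisfy |a − b| > h₀, the E-neighborhood of the middle half of the segment from a to b (all points within distance E of the segment from (3/4)a + (1/4)b to (1/4)a + (3/4)b) is contained in W_φ(a,b) = {c : φ(|a−c|) + φ(|c−b|) ≤ φ(|a−b|)}. -/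
open Real

lemma tangent_rpow {α : ℝ} (hα : 1 ≤ α) {x y : ℝ} (hx : 0 ≤ x) (hy : 0 < y) :
    y ^ α + α * y ^ (α - 1) * (x - y) ≤ x ^ α := by
  have hxy : -1 ≤ x / y - 1 := by
    have := div_nonneg hx hy.le; linarith
  have hb := one_add_mul_self_le_rpow_one_add hxy hα
  rw [add_sub_cancel] at hb
  have hdiv : (x / y) ^ α = x ^ α / y ^ α := Real.div_rpow hx hy.le α
  have hyα : (0:ℝ) < y ^ α := Real.rpow_pos_of_pos hy α
  have hy1 : y ^ (α - 1) * y = y ^ α := by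
    nth_rewrite 2 [← Real.rpow_one y]
    rw [← Real.rpow_add hy]; ring_nf
  have h2 := mul_le_mul_of_nonneg_right hb hyα.le
  rw [hdiv, div_mul_cancel₀ _ hyα.ne'] at h2
  have h3 : (1 + α * (x / y - 1)) * y ^ α = y ^ α + α * y ^ (α - 1) * (x - y) := by
    have hyne : y ≠ 0 := hy.ne'
    field_simp
    linear_combination (-(α * (x - y))) * hy1
  linarith [h3 ▸ h2]

lemma truncPow_mono_s12 {α h : ℝ} (hα : 1 ≤ α) (hh : 0 < h) {x y : ℝ} (hx : 0 ≤ x) (hxy : x ≤ y) :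
    truncPow α h x ≤ truncPow α h y := by
  have hα0 : 0 < α := by linarith
  have hslope : 0 ≤ α * h ^ (α - 1) := by positivity
  unfold truncPow
  by_cases h1 : x ≤ h <;> by_cases h2 : y ≤ h <;> simp only [h1, h2, if_true, if_false]
  · exact Real.rpow_le_rpow hx hxy hα0.le
  · have : x ^ α ≤ h ^ α := Real.rpow_le_rpow hx h1 hα0.le
    nlinarith [mul_nonneg hslope (by linarith : (0:ℝ) ≤ y - h)]
  · exact absurd (hxy.trans h2) h1
  · nlinarith [mul_le_mul_of_nonneg_left (by linarith : x - h ≤ y - h) hslope]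

lemma truncPow_of_ge {α h x : ℝ} (hα : 1 ≤ α) (hh : 0 < h) (hx : h ≤ x) :
    truncPow α h x = α * h ^ (α - 1) * x - (α - 1) * h ^ α := by
  have hy1 : h ^ (α - 1) * h = h ^ α := by
    nth_rewrite 2 [← Real.rpow_one h]
    rw [← Real.rpow_add hh]; ring_nf
  unfold truncPow
  by_cases h1 : x ≤ h
  · have : x = h := le_antisymm h1 hx
    subst this
    simp only [le_refl, if_true]
    nlinarith [hy1]
  · simp only [h1, if_false]
    nlinarith [hy1]

-- Step (1)/(2): Lipschitz-type bound
lemma step12 {α h E x t : ℝ} (hα : 1 < α) (hh : 0 < h) (hE : 0 < E)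
    (hx : 0 < x) (hxt : x ≤ t) (hEt : E ≤ t) :
    truncPow α h (x + E) ≤ truncPow α h x + α * E * (2 * min t h) ^ (α - 1) := by
  have hα0 : 0 < α := by linarith
  have ht : 0 < t := lt_of_lt_of_le hx hxt
  have hm : 0 < min t h := lt_min ht hh
  by_cases hc : x + E ≤ h
  · -- power regime
    have h1 : truncPow α h (x + E) = (x + E) ^ α := by
      unfold truncPow; simp [hc]
    have h2 : truncPow α h x = x ^ α := by
      unfold truncPow; simp [show x ≤ h by linarith]
    have htan := tangent_rpow hα.le (le_of_lt hx) (by linarith : (0:ℝ) < x + E)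
    -- x^α ≥ (x+E)^α + α (x+E)^(α-1) (x - (x+E)) = (x+E)^α - α E (x+E)^(α-1)
    have hle : x + E ≤ 2 * min t h := by
      rcases le_total t h with h'|h'
      · rw [min_eq_left h']; linarith
      · rw [min_eq_right h']; linarith
    have hr : (x + E) ^ (α - 1) ≤ (2 * min t h) ^ (α - 1) :=
      Real.rpow_le_rpow (by linarith) hle (by linarith)
    rw [h1, h2]
    nlinarith [mul_le_mul_of_nonneg_left hr (by positivity : (0:ℝ) ≤ α * E)]
  · -- x + E > h
    push_neg at hc
    have h1 : truncPow α h (x + E) = α * h ^ (α - 1) * (x + E) - (α - 1) * h ^ α :=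
      truncPow_of_ge hα.le hh hc.le
    have hlow : α * h ^ (α - 1) * x - (α - 1) * h ^ α ≤ truncPow α h x := by
      by_cases h2 : x ≤ h
      · have : truncPow α h x = x ^ α := by unfold truncPow; simp [h2]
        rw [this]
        have hy1 : h ^ (α - 1) * h = h ^ α := by
          nth_rewrite 2 [← Real.rpow_one h]
          rw [← Real.rpow_add hh]; ring_nf
        have := tangent_rpow hα.le hx.le hh
        nlinarith [hy1]
      · rw [truncPow_of_ge hα.le hh (le_of_not_ge h2)]
    have hhm : h ≤ 2 * min t h := by
      rcases le_total t h with h'|h'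
      · rw [min_eq_left h']; linarith
      · rw [min_eq_right h']; linarith
    have hr : h ^ (α - 1) ≤ (2 * min t h) ^ (α - 1) :=
      Real.rpow_le_rpow hh.le hhm (by linarith)
    rw [h1]
    nlinarith [mul_le_mul_of_nonneg_left hr (by positivity : (0:ℝ) ≤ α * E)]

-- Step (3): key slack
lemma step3 {α h E s t : ℝ} (hα : 1 < α) (hh : 0 < h) (hE : 0 < E)
    (hs : 0 < s) (hst : s ≤ t)
    (hks : (2:ℝ) ^ α * α * E ≤ (α - 1) * s)
    (hkh : (2:ℝ) ^ α * α * E ≤ (α - 1) * h) :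
    truncPow α h s + 2 * (α * E * (2 * min t h) ^ (α - 1)) ≤ α * (min t h) ^ (α - 1) * s := by
  have ht : 0 < t := lt_of_lt_of_le hs hst
  have hm : 0 < min t h := lt_min ht hh
  have hsplit : (2 * min t h) ^ (α - 1) = 2 ^ (α - 1) * (min t h) ^ (α - 1) :=
    Real.mul_rpow (by norm_num) hm.le
  have h2α : (2:ℝ) ^ (α - 1) * 2 = 2 ^ α := by
    nth_rewrite 2 [← Real.rpow_one 2]
    rw [← Real.rpow_add (by norm_num : (0:ℝ) < 2)]; ring_nf
  have hM : 0 < (min t h) ^ (α - 1) := Real.rpow_pos_of_pos hm _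
  by_cases hsh : s ≤ h
  · have hφ : truncPow α h s = s ^ α := by unfold truncPow; simp [hsh]
    have hsm : s ≤ min t h := le_min hst hsh
    have hs1 : s ^ α = s ^ (α - 1) * s := by
      nth_rewrite 3 [← Real.rpow_one s]
      rw [← Real.rpow_add hs]; ring_nf
    have hr : s ^ (α - 1) ≤ (min t h) ^ (α - 1) :=
      Real.rpow_le_rpow hs.le hsm (by linarith)
    have key := mul_le_mul_of_nonneg_right hks hM.le
    rw [hφ, hs1, hsplit]
    have e1 : 2 * (α * E * (2 ^ (α - 1) * (min t h) ^ (α - 1)))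
        = 2 ^ α * α * E * (min t h) ^ (α - 1) := by rw [← h2α]; ring
    have e2 := mul_le_mul_of_nonneg_right hr hs.le
    linarith [e1, key, e2]
  · push_neg at hsh
    have hth : h ≤ t := le_trans hsh.le hst
    have hmin : min t h = h := min_eq_right hth
    rw [hmin] at hsplit
    rw [hmin, truncPow_of_ge hα.le hh hsh.le, hsplit]
    have hy1 : h ^ (α - 1) * h = h ^ α := by
      nth_rewrite 2 [← Real.rpow_one h]
      rw [← Real.rpow_add hh]; ring_nf
    have hM' : 0 < h ^ (α - 1) := Real.rpow_pos_of_pos hh _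
    have key := mul_le_mul_of_nonneg_right hkh hM'.le
    have e1 : 2 * (α * E * (2 ^ (α - 1) * h ^ (α - 1))) = 2 ^ α * α * E * h ^ (α - 1) := by
      rw [← h2α]; ring
    have e2 : (α - 1) * h * h ^ (α - 1) = (α - 1) * h ^ α := by
      rw [← hy1]; ring
    linarith [e1, key, e2]

-- Step (4): convexity lower bound on φ(s+t)
lemma step4 {α h s t : ℝ} (hα : 1 < α) (hh : 0 < h) (hs : 0 < s) (hst : s ≤ t) :
    truncPow α h t + α * (min t h) ^ (α - 1) * s ≤ truncPow α h (s + t) := by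
  have ht : 0 < t := lt_of_lt_of_le hs hst
  by_cases hht : h ≤ t
  · rw [min_eq_right hht, truncPow_of_ge hα.le hh hht,
      truncPow_of_ge hα.le hh (by linarith : h ≤ s + t)]
    ring_nf
    linarith
  · push_neg at hht
    rw [min_eq_left hht.le]
    have hφt : truncPow α h t = t ^ α := by unfold truncPow; simp [hht.le]
    by_cases hLh : s + t ≤ h
    · have hφL : truncPow α h (s + t) = (s + t) ^ α := by unfold truncPow; simp [hLh]
      have := tangent_rpow hα.le (by linarith : (0:ℝ) ≤ s + t) ht
      rw [hφt, hφL]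
      nlinarith [this]
    · push_neg at hLh
      have hφL : truncPow α h (s + t) = h ^ α + α * h ^ (α - 1) * (s + t - h) := by
        unfold truncPow; simp [not_le.mpr hLh]
      have htan := tangent_rpow hα.le hh.le ht
      -- h^α ≥ t^α + α t^(α-1) (h - t)
      have hr : t ^ (α - 1) ≤ h ^ (α - 1) :=
        Real.rpow_le_rpow ht.le hht.le (by linarith)
      rw [hφt, hφL]
      nlinarith [mul_le_mul_of_nonneg_right hr (by linarith : (0:ℝ) ≤ s + t - h),
        htan, mul_pos (mul_pos (by linarith : (0:ℝ) < α) (Real.rpow_pos_of_pos ht (α-1))) hs]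

lemma core {α h E s t : ℝ} (hα : 1 < α) (hE : 0 < E)
    (hh : 2 ^ (α + 2) * α * E / (α - 1) < h)
    (hL : 2 ^ (α + 2) * α * E / (α - 1) < s + t)
    (hst : s ≤ t) (hs4 : (s + t) / 4 ≤ s) :
    truncPow α h (s + E) + truncPow α h (t + E) ≤ truncPow α h (s + t) := by
  have hα1 : (0:ℝ) < α - 1 := by linarith
  have hp : (0:ℝ) < 2 ^ α * α * E := by positivity
  have h2a : (2:ℝ) ^ (α + 2) = 4 * 2 ^ α := by
    rw [Real.rpow_add (by norm_num : (0:ℝ) < 2), Real.rpow_two]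
    ring
  have h2ge2 : (2:ℝ) ≤ 2 ^ α := by
    calc (2:ℝ) = 2 ^ (1:ℝ) := (Real.rpow_one 2).symm
    _ ≤ 2 ^ α := Real.rpow_le_rpow_of_exponent_le (by norm_num) (by linarith)
  have hh' := (div_lt_iff₀ hα1).mp hh
  have hL' := (div_lt_iff₀ hα1).mp hL
  rw [h2a] at hh' hL'
  -- positivity facts
  have hspos : 0 < s := by nlinarith
  have hhpos : 0 < h := by nlinarith
  have htpos : 0 < t := lt_of_lt_of_le hspos hst
  have haE : 2 * (α * E) ≤ 2 ^ α * (α * E) :=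
    mul_le_mul_of_nonneg_right h2ge2 (by positivity)
  have hEt : E ≤ t := by nlinarith [mul_pos hα1 hE]
  have hks : (2:ℝ) ^ α * α * E ≤ (α - 1) * s := by nlinarith
  have hkh : (2:ℝ) ^ α * α * E ≤ (α - 1) * h := by nlinarith
  have H1 := step12 hα hhpos hE hspos hst hEt
  have H2 := step12 hα hhpos hE htpos le_rfl hEt
  have H3 := step3 hα hhpos hE hspos hst hks hkh
  have H4 := step4 hα hhpos hspos hst
  linarith


/-- Lemma 5.4: for every `E > 0` there is `h₀ > 0` such that whenever
`h > h₀` and `|a − b| > h₀`, the `E`-neighborhood of the middle half of the segment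
from `a` to `b` lies in `W_φ(a, b)`. -/
theorem stmt12 {d : ℕ} {α : ℝ} (hα : 1 < α) (E : ℝ) (hE : 0 < E) :
    ∃ h₀ > (0 : ℝ), ∀ h : ℝ, h₀ < h →
      ∀ a b : EuclideanSpace ℝ (Fin d), h₀ < ‖a - b‖ →
        ∀ c : EuclideanSpace ℝ (Fin d),
          (∃ p ∈ segment ℝ ((3 / 4 : ℝ) • a + (1 / 4 : ℝ) • b)
              ((1 / 4 : ℝ) • a + (3 / 4 : ℝ) • b), ‖c - p‖ ≤ E) →
          truncPow α h ‖a - c‖ + truncPow α h ‖c - b‖ ≤ truncPow α h ‖a - b‖ := by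
  have hα1 : (0:ℝ) < α - 1 := by linarith
  refine ⟨2 ^ (α + 2) * α * E / (α - 1), div_pos (by positivity) hα1, ?_⟩
  intro h hh a b hab c hc
  obtain ⟨p, hp, hcp⟩ := hc
  obtain ⟨u, v, hu, hv, huv, rfl⟩ := hp
  have hv' : v = 1 - u := by linarith
  subst hv'
  have hu1 : u ≤ 1 := by linarith
  set P := u • ((3 / 4 : ℝ) • a + (1 / 4 : ℝ) • b)
      + (1 - u) • ((1 / 4 : ℝ) • a + (3 / 4 : ℝ) • b) with hP
  set L := ‖a - b‖ with hLdef
  have hL0 : 0 < L := lt_trans (div_pos (by positivity) hα1) hab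
  have hhpos : 0 < h := lt_trans (div_pos (by positivity) hα1) hh
  have hap : a - P = ((3 - 2*u)/4) • (a - b) := by rw [hP]; module
  have hpb : P - b = ((1 + 2*u)/4) • (a - b) := by rw [hP]; module
  have hs : ‖a - P‖ = (3 - 2*u)/4 * L := by
    rw [hap, norm_smul, Real.norm_eq_abs, abs_of_nonneg (by linarith)]
  have ht : ‖P - b‖ = (1 + 2*u)/4 * L := by
    rw [hpb, norm_smul, Real.norm_eq_abs, abs_of_nonneg (by linarith)]
  have hac : ‖a - c‖ ≤ (3 - 2*u)/4 * L + E := by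
    have h1 : ‖a - c‖ ≤ ‖a - P‖ + ‖P - c‖ := by
      have : a - c = (a - P) + (P - c) := by abel
      rw [this]; exact norm_add_le _ _
    rw [norm_sub_rev P c, hs] at h1
    linarith
  have hcb : ‖c - b‖ ≤ (1 + 2*u)/4 * L + E := by
    have h1 : ‖c - b‖ ≤ ‖c - P‖ + ‖P - b‖ := by
      have : c - b = (c - P) + (P - b) := by abel
      rw [this]; exact norm_add_le _ _
    rw [ht] at h1
    linarith
  have m1 : truncPow α h ‖a - c‖ ≤ truncPow α h ((3 - 2*u)/4 * L + E) :=
    truncPow_mono_s12 hα.le hhpos (norm_nonneg _) hac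
  have m2 : truncPow α h ‖c - b‖ ≤ truncPow α h ((1 + 2*u)/4 * L + E) :=
    truncPow_mono_s12 hα.le hhpos (norm_nonneg _) hcb
  set s' := (3 - 2*u)/4 * L with hs'
  set t' := (1 + 2*u)/4 * L with ht'
  have hsum : s' + t' = L := by rw [hs', ht']; ring
  have hLbig : 2 ^ (α + 2) * α * E / (α - 1) < s' + t' := by rw [hsum]; exact hab
  rcases le_total s' t' with hc' | hc'
  · have h4 : (s' + t') / 4 ≤ s' := by
      rw [hs', ht']
      nlinarith [hL0, hu1]
    have := core hα hE hh hLbig hc' h4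
    rw [hsum] at this
    linarith
  · have h4 : (t' + s') / 4 ≤ t' := by
      rw [hs', ht']
      nlinarith [hL0, hu]
    have hLbig' : 2 ^ (α + 2) * α * E / (α - 1) < t' + s' := by
      rw [add_comm t' s']; exact hLbig
    have := core hα hE hh hLbig' hc' h4
    rw [add_comm t' s', hsum] at this
    linarith
end

section
/- Let θ(x,y) denote the angle between nonzero vectors x, y ∈ ℝ^d. Suppose L ≥ 1 satisfies L^{1−δ} < L/3, let q_k, q_j ∈ ℝ^d with |q_k|, |q_j| ≥ L, |q_j| ≤ 3|q_k|, and Dist(q_k, segment[0, q_j]) ≤ |q_j|^{1−δ} where 0 < δ < 1/4. Then θ(q_k, q_j) < π/2 and sin θ(q_k, q_j) ≤ 3^{1−δ} |q_k|^{−δ}, hence θ(q_k, q_j) ≤ (π/2)·3^{1−δ}·|q_k|^{−δ}. -/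
open Real

set_option maxHeartbeats 1600000 in
/-- Case 1 of Lemma 2.7: a point `q_k` close to the segment `[0, q_j]`
with comparable norm makes a small angle with `q_j`. -/
theorem stmt14 {d : ℕ} {δ L : ℝ} (hδ0 : 0 < δ) (hδ : δ < 1 / 4) (hL : 1 ≤ L)
    (hL2 : L ^ (1 - δ) < L / 3)
    (qk qj : EuclideanSpace ℝ (Fin d))
    (hqk : L ≤ ‖qk‖) (hqj : L ≤ ‖qj‖) (h3 : ‖qj‖ ≤ 3 * ‖qk‖)
    (hdist : Metric.infDist qk (segment ℝ 0 qj) ≤ ‖qj‖ ^ (1 - δ)) :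
    InnerProductGeometry.angle qk qj < π / 2 ∧
    Real.sin (InnerProductGeometry.angle qk qj) ≤ 3 ^ (1 - δ) * ‖qk‖ ^ (-δ) ∧
    InnerProductGeometry.angle qk qj ≤ π / 2 * (3 ^ (1 - δ) * ‖qk‖ ^ (-δ)) := by
  have hL0 : (0:ℝ) < L := lt_of_lt_of_le one_pos hL
  have hqk0 : (0:ℝ) < ‖qk‖ := lt_of_lt_of_le hL0 hqk
  have hqj0 : (0:ℝ) < ‖qj‖ := lt_of_lt_of_le hL0 hqj
  set E : ℝ := ‖qj‖ ^ (1 - δ) with hE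
  have hE0 : 0 ≤ E := Real.rpow_nonneg hqj0.le _
  have hδ1 : (1:ℝ) + -δ ≠ 0 := by intro h; nlinarith
  -- E < ‖qj‖ / 3
  have hLinv : L ^ (-δ) < 1 / 3 := by
    have h1 : L ^ (1 - δ) = L * L ^ (-δ) := by
      rw [show (1 - δ) = 1 + (-δ) by ring, Real.rpow_one_add' hL0.le hδ1]
    rw [h1, div_eq_mul_one_div] at hL2
    exact lt_of_mul_lt_mul_left hL2 hL0.le
  have hElt : E < ‖qj‖ / 3 := by
    have h1 : E = ‖qj‖ * ‖qj‖ ^ (-δ) := by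
      rw [hE, show (1 - δ) = 1 + (-δ) by ring, Real.rpow_one_add' hqj0.le hδ1]
    have h2 : ‖qj‖ ^ (-δ) ≤ L ^ (-δ) :=
      Real.rpow_le_rpow_of_nonpos hL0 hqj (by linarith)
    calc E = ‖qj‖ * ‖qj‖ ^ (-δ) := h1
      _ ≤ ‖qj‖ * L ^ (-δ) := mul_le_mul_of_nonneg_left h2 hqj0.le
      _ < ‖qj‖ * (1/3) := mul_lt_mul_of_pos_left hLinv hqj0
      _ = ‖qj‖ / 3 := by ring
  have hEqk : E < ‖qk‖ := lt_of_lt_of_le hElt (by linarith)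
  -- Get the nearest point on the segment
  have hcomp : IsCompact (segment ℝ (0 : EuclideanSpace ℝ (Fin d)) qj) := by
    rw [segment_eq_image]
    exact (isCompact_Icc.image (by continuity))
  obtain ⟨p, hpmem, hpd⟩ := hcomp.exists_infDist_eq_dist
    ⟨0, left_mem_segment ℝ _ _⟩ qk
  rw [segment_eq_image] at hpmem
  obtain ⟨t, ht, hpt⟩ := hpmem
  have hpt' : p = t • qj := by rw [← hpt]; simp
  have hdp : ‖qk - t • qj‖ ≤ E := by
    have h := hpd ▸ hdist
    rwa [hpt', dist_eq_norm] at h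
  obtain ⟨r, hr⟩ : ∃ r : ℝ, (inner ℝ qk qj : ℝ) = r := ⟨_, rfl⟩
  -- expand the square
  have hsq : ‖qk - t • qj‖ ^ 2 = ‖qk‖^2 - 2 * t * r + t^2 * ‖qj‖^2 := by
    rw [@norm_sub_sq_real, real_inner_smul_right, norm_smul, hr]
    simp only [Real.norm_eq_abs, mul_pow, sq_abs]
    ring
  have hsqle : ‖qk‖^2 - 2 * t * r + t^2 * ‖qj‖^2 ≤ E^2 := by
    rw [← hsq]
    exact pow_le_pow_left₀ (norm_nonneg _) hdp 2
  -- t > 0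
  have ht0 : 0 < t := by
    rcases lt_or_eq_of_le ht.1 with h | h
    · exact h
    · exfalso
      rw [← h] at hsqle
      simp at hsqle
      nlinarith
  -- r > 0
  have hrpos : 0 < r := by nlinarith [sq_nonneg E]
  -- angle < π/2
  have hangle_lt : InnerProductGeometry.angle qk qj < π / 2 := by
    rw [InnerProductGeometry.angle, hr, Real.arccos_lt_pi_div_two]
    exact div_pos hrpos (mul_pos hqk0 hqj0)
  refine ⟨hangle_lt, ?_⟩
  -- sin bound
  have hcos : Real.cos (InnerProductGeometry.angle qk qj) = r / (‖qk‖ * ‖qj‖) := by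
    rw [InnerProductGeometry.cos_angle, hr]
  have hsin0 : 0 ≤ Real.sin (InnerProductGeometry.angle qk qj) :=
    Real.sin_nonneg_of_nonneg_of_le_pi (InnerProductGeometry.angle_nonneg _ _)
      (InnerProductGeometry.angle_le_pi _ _)
  have hsin2 : Real.sin (InnerProductGeometry.angle qk qj)^2
      = 1 - (r / (‖qk‖ * ‖qj‖))^2 := by
    rw [Real.sin_sq, hcos]
  have hkey : (‖qk‖ * Real.sin (InnerProductGeometry.angle qk qj))^2 ≤ E^2 := by
    have hqj2 : (0:ℝ) < ‖qj‖^2 := by positivity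
    have hmin : ‖qk‖^2 - r^2 / ‖qj‖^2 ≤ ‖qk‖^2 - 2 * t * r + t^2 * ‖qj‖^2 := by
      have hmin' : 2 * t * r - t^2 * ‖qj‖^2 ≤ r^2 / ‖qj‖^2 := by
        rw [le_div_iff₀ hqj2]
        nlinarith [sq_nonneg (t * ‖qj‖^2 - r)]
      linarith
    have heq : (‖qk‖ * Real.sin (InnerProductGeometry.angle qk qj))^2
        = ‖qk‖^2 - r^2 / ‖qj‖^2 := by
      have h5 : ‖qk‖^2 * (r / (‖qk‖ * ‖qj‖))^2 = r^2 / ‖qj‖^2 := by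
        field_simp
      rw [mul_pow, hsin2, mul_sub, mul_one, h5]
    rw [heq]
    linarith
  have hsinE : ‖qk‖ * Real.sin (InnerProductGeometry.angle qk qj) ≤ E := by
    have hnn : 0 ≤ ‖qk‖ * Real.sin (InnerProductGeometry.angle qk qj) :=
      mul_nonneg (norm_nonneg _) hsin0
    nlinarith
  -- the bound E ≤ 3^(1-δ) * ‖qk‖^(-δ) * ‖qk‖
  have hEbound : E ≤ 3 ^ (1 - δ) * ‖qk‖ ^ (-δ) * ‖qk‖ := by
    have h1 : E ≤ (3 * ‖qk‖) ^ (1 - δ) :=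
      Real.rpow_le_rpow hqj0.le h3 (by linarith)
    have h2 : (3 * ‖qk‖ : ℝ) ^ (1 - δ) = 3 ^ (1 - δ) * ‖qk‖ ^ (1 - δ) :=
      Real.mul_rpow (by norm_num) hqk0.le
    have h3' : ‖qk‖ ^ (1 - δ) = ‖qk‖ ^ (-δ) * ‖qk‖ := by
      nth_rewrite 3 [← Real.rpow_one ‖qk‖]
      rw [← Real.rpow_add hqk0]
      ring_nf
    rw [h2, h3'] at h1
    linarith [h1]
  have hsinbound : Real.sin (InnerProductGeometry.angle qk qj)
      ≤ 3 ^ (1 - δ) * ‖qk‖ ^ (-δ) := by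
    rw [← mul_le_mul_iff_of_pos_right hqk0]
    calc Real.sin (InnerProductGeometry.angle qk qj) * ‖qk‖
        = ‖qk‖ * Real.sin (InnerProductGeometry.angle qk qj) := by ring
      _ ≤ E := hsinE
      _ ≤ 3 ^ (1 - δ) * ‖qk‖ ^ (-δ) * ‖qk‖ := hEbound
  refine ⟨hsinbound, ?_⟩
  -- Jordan's inequality
  have hπ : (0:ℝ) < π := Real.pi_pos
  have hjordan : InnerProductGeometry.angle qk qj
      ≤ π / 2 * Real.sin (InnerProductGeometry.angle qk qj) := by
    have h := Real.mul_le_sin (InnerProductGeometry.angle_nonneg qk qj) hangle_lt.le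
    have h2 := mul_le_mul_of_nonneg_left h (by positivity : (0:ℝ) ≤ π / 2)
    have h3 : π / 2 * (2 / π * InnerProductGeometry.angle qk qj)
        = InnerProductGeometry.angle qk qj := by
      field_simp
    linarith
  calc InnerProductGeometry.angle qk qj
      ≤ π / 2 * Real.sin (InnerProductGeometry.angle qk qj) := hjordan
    _ ≤ π / 2 * (3 ^ (1 - δ) * ‖qk‖ ^ (-δ)) :=
        mul_le_mul_of_nonneg_left hsinbound (by positivity)
end

section
/- Let R be a tree whose vertex set U ⊂ ℝ^d is locally finite, and suppose that for some vertex u, R is f-straight at u where f(ℓ) → 0 as ℓ → ∞ (i.e., for all but finitely many vertices u', the set of vertices whose tree-path from u passes through u' is contained in u + C(u'−u, f(|u'−u|)), where C(x,ε) is the cone of vectors making angle at most ε with x). Then every semi-infinite path in R starting from u has an asymptotic direction: if u = u₁, u₂, ... is a semi-infinite path in R, then u_n/|u_n| converges in S^{d−1}. -/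
open Filter InnerProductGeometry

open scoped RealInnerProductSpace

lemma dist_normalize_le_angle {E : Type*} [NormedAddCommGroup E] [InnerProductSpace ℝ E]
    {x y : E} (hx : x ≠ 0) (hy : y ≠ 0) :
    ‖‖x‖⁻¹ • x - ‖y‖⁻¹ • y‖ ≤ angle x y := by
  set a := ‖x‖⁻¹ • x with ha'
  set b := ‖y‖⁻¹ • y with hb'
  have ha : ‖a‖ = 1 := norm_smul_inv_norm hx
  have hb : ‖b‖ = 1 := norm_smul_inv_norm hy
  have hxn : ‖x‖ ≠ 0 := norm_ne_zero_iff.2 hx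
  have hyn : ‖y‖ ≠ 0 := norm_ne_zero_iff.2 hy
  have hab : ⟪a, b⟫ = Real.cos (angle x y) := by
    rw [cos_angle, ha', hb', real_inner_smul_left, real_inner_smul_right]
    field_simp
  have hsq : ‖a - b‖ ^ 2 ≤ (angle x y) ^ 2 := by
    have h1 : ‖a - b‖ ^ 2 = ‖a‖ ^ 2 - 2 * ⟪a, b⟫ + ‖b‖ ^ 2 := by
      rw [@norm_sub_sq_real]
    have hcos := Real.one_sub_sq_div_two_le_cos (x := angle x y)
    rw [h1, ha, hb, hab]; nlinarith
  calc ‖a - b‖ = Real.sqrt (‖a - b‖ ^ 2) := (Real.sqrt_sq (norm_nonneg _)).symm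
    _ ≤ Real.sqrt ((angle x y) ^ 2) := Real.sqrt_le_sqrt hsq
    _ = angle x y := Real.sqrt_sq (angle_nonneg _ _)

def walkAlong {V : Type*} (G : SimpleGraph V) (w : ℕ → V)
    (hadj : ∀ n : ℕ, G.Adj (w n) (w (n + 1))) : ∀ n : ℕ, G.Walk (w 0) (w n)
  | 0 => SimpleGraph.Walk.nil
  | (n+1) => (walkAlong G w hadj n).concat (hadj n)

lemma support_walkAlong {V : Type*} (G : SimpleGraph V) (w : ℕ → V)
    (hadj : ∀ n : ℕ, G.Adj (w n) (w (n + 1))) (n : ℕ) :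
    (walkAlong G w hadj n).support = (List.range (n+1)).map w := by
  induction n with
  | zero => simp [walkAlong, List.range_succ]
  | succ n ih =>
      rw [walkAlong, SimpleGraph.Walk.support_concat, ih, List.range_succ (n := n+1)]
      simp

lemma isPath_walkAlong {V : Type*} (G : SimpleGraph V) (w : ℕ → V)
    (hadj : ∀ n : ℕ, G.Adj (w n) (w (n + 1))) (hwinj : Function.Injective w) (n : ℕ) :
    (walkAlong G w hadj n).IsPath := by
  rw [SimpleGraph.Walk.isPath_def, support_walkAlong]
  exact List.nodup_range.map hwinj


/-- Proposition 2.8(i): in a tree embedded in `ℝ^d` with locally finite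
vertex set which is `f`-straight at `u` with `f(ℓ) → 0`, every semi-infinite
self-avoiding path from `u` has an asymptotic direction. -/
theorem stmt17 {d : ℕ} {V : Type*} (G : SimpleGraph V) (hG : G.IsTree)
    (pos : V → EuclideanSpace ℝ (Fin d)) (hinj : Function.Injective pos)
    (hlf : ∀ r : ℝ, {v : V | ‖pos v‖ ≤ r}.Finite)
    (f : ℝ → ℝ) (hf : Tendsto f atTop (nhds 0))
    (u : V)
    (hstraight : {u' : V |
      ¬ ∀ u'' : V, (∀ p : G.Walk u u'', p.IsPath → u' ∈ p.support) →
          angle (pos u' - pos u) (pos u'' - pos u) ≤ f ‖pos u' - pos u‖}.Finite)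
    (w : ℕ → V) (hw0 : w 0 = u)
    (hadj : ∀ n : ℕ, G.Adj (w n) (w (n + 1)))
    (hwinj : Function.Injective w) :
    ∃ xhat : EuclideanSpace ℝ (Fin d), ‖xhat‖ = 1 ∧
      Tendsto (fun n => ‖pos (w n)‖⁻¹ • pos (w n)) atTop (nhds xhat) := by
  subst hw0
  set x : ℕ → EuclideanSpace ℝ (Fin d) := fun n => pos (w n) - pos (w 0) with hxdef
  -- Step 1 : norms go to infinity
  have hnorm : Tendsto (fun n => ‖pos (w n)‖) atTop atTop := by
    rw [tendsto_atTop]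
    intro b
    have hfin : (w ⁻¹' {v | ‖pos v‖ ≤ b}).Finite :=
      Set.Finite.preimage hwinj.injOn (hlf b)
    have h := hfin.eventually_cofinite_notMem
    rw [Nat.cofinite_eq_atTop] at h
    filter_upwards [h] with n hn
    exact (lt_of_not_ge hn).le
  have hxnorm : Tendsto (fun n => ‖x n‖) atTop atTop := by
    apply tendsto_atTop_mono (fun n => ?_)
      (tendsto_atTop_add_const_right _ (-‖pos (w 0)‖) hnorm)
    have h := norm_sub_norm_le (pos (w n)) (pos (w 0))
    simp only [hxdef]
    linarith
  have hxne : ∀ n : ℕ, 1 ≤ n → x n ≠ 0 := by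
    intro n hn h
    have h2 : pos (w n) = pos (w 0) := by
      have := h
      simp only [hxdef, sub_eq_zero] at this
      exact this
    exact (Nat.one_le_iff_ne_zero.mp hn) (hwinj (hinj h2))
  -- Step 2 : key angle bound
  have hbadfin : (w ⁻¹' {u' : V |
      ¬ ∀ u'' : V, (∀ p : G.Walk (w 0) u'', p.IsPath → u' ∈ p.support) →
          angle (pos u' - pos (w 0)) (pos u'' - pos (w 0)) ≤ f ‖pos u' - pos (w 0)‖}).Finite :=
    Set.Finite.preimage hwinj.injOn hstraight
  have hkey : ∀ n m : ℕ, n ∉ w ⁻¹' {u' : V |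
      ¬ ∀ u'' : V, (∀ p : G.Walk (w 0) u'', p.IsPath → u' ∈ p.support) →
          angle (pos u' - pos (w 0)) (pos u'' - pos (w 0)) ≤ f ‖pos u' - pos (w 0)‖} →
      n ≤ m → angle (x n) (x m) ≤ f ‖x n‖ := by
    intro n m hn hnm
    have hprop : ∀ u'' : V, (∀ p : G.Walk (w 0) u'', p.IsPath → w n ∈ p.support) →
        angle (pos (w n) - pos (w 0)) (pos u'' - pos (w 0)) ≤ f ‖pos (w n) - pos (w 0)‖ :=
      not_not.mp hn
    exact hprop (w m) (fun p hp => by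
      have heq := (hG.existsUnique_path (w 0) (w m)).unique hp
        (isPath_walkAlong G w hadj hwinj m)
      rw [heq, support_walkAlong]
      exact List.mem_map.mpr ⟨n, List.mem_range.mpr (by omega), rfl⟩)
  have heps : Tendsto (fun n => f ‖x n‖) atTop (nhds 0) := hf.comp hxnorm
  -- Step 3 : Cauchy sequence of normalized vectors
  set a : ℕ → EuclideanSpace ℝ (Fin d) := fun n => ‖x n‖⁻¹ • x n with hadef
  have hcauchy : CauchySeq a := by
    rw [Metric.cauchySeq_iff']
    intro ε hε
    have h1 : ∀ᶠ n in atTop, f ‖x n‖ < ε := heps.eventually (gt_mem_nhds hε)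
    have h2 : ∀ᶠ n : ℕ in atTop, n ∉ w ⁻¹' {u' : V |
        ¬ ∀ u'' : V, (∀ p : G.Walk (w 0) u'', p.IsPath → u' ∈ p.support) →
            angle (pos u' - pos (w 0)) (pos u'' - pos (w 0)) ≤ f ‖pos u' - pos (w 0)‖} := by
      have h := hbadfin.eventually_cofinite_notMem
      rwa [Nat.cofinite_eq_atTop] at h
    obtain ⟨N, hfN, hNbad, hN1⟩ := (h1.and (h2.and (eventually_ge_atTop 1))).exists
    refine ⟨N, fun n hn => ?_⟩
    calc dist (a n) (a N) = ‖‖x N‖⁻¹ • x N - ‖x n‖⁻¹ • x n‖ := by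
          rw [dist_eq_norm, norm_sub_rev]
      _ ≤ angle (x N) (x n) :=
          dist_normalize_le_angle (hxne N hN1) (hxne n (le_trans hN1 hn))
      _ ≤ f ‖x N‖ := hkey N n hNbad hn
      _ < ε := hfN
  obtain ⟨xhat, hxhat⟩ := cauchySeq_tendsto_of_complete hcauchy
  have hunit : ‖xhat‖ = 1 := by
    refine tendsto_nhds_unique hxhat.norm ?_
    have hc : Tendsto (fun _ : ℕ => (1:ℝ)) atTop (nhds 1) := tendsto_const_nhds
    refine Tendsto.congr' ?_ hc
    filter_upwards [eventually_ge_atTop 1] with n hn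
    exact (norm_smul_inv_norm (hxne n hn)).symm
  refine ⟨xhat, hunit, ?_⟩
  -- Step 4 : transfer from x-directions to pos-directions
  have hdiff : Tendsto (fun n => ‖pos (w n)‖⁻¹ • pos (w n) - a n) atTop (nhds 0) := by
    apply squeeze_zero_norm' ?_
      (Tendsto.div_atTop (tendsto_const_nhds (x := 2 * ‖pos (w 0)‖)) hnorm)
    filter_upwards [hnorm.eventually_gt_atTop ‖pos (w 0)‖, eventually_ge_atTop 1]
      with n hy hn1
    have hyn : (0:ℝ) < ‖pos (w n)‖ := lt_of_le_of_lt (norm_nonneg _) hy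
    have hxn : (0:ℝ) < ‖x n‖ := norm_pos_iff.mpr (hxne n hn1)
    have h5 : pos (w n) - x n = pos (w 0) := by simp [hxdef]
    have habs : |‖x n‖ - ‖pos (w n)‖| ≤ ‖pos (w 0)‖ := by
      have := abs_norm_sub_norm_le (x n) (pos (w n))
      have h6 : x n - pos (w n) = -(pos (w 0)) := by simp [hxdef]
      rwa [h6, norm_neg] at this
    have hdecomp : ‖pos (w n)‖⁻¹ • pos (w n) - a n
        = ‖pos (w n)‖⁻¹ • (pos (w n) - x n) + (‖pos (w n)‖⁻¹ - ‖x n‖⁻¹) • x n := by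
      simp only [hadef, smul_sub, sub_smul]
      abel
    rw [hdecomp, h5]
    have heq : |‖pos (w n)‖⁻¹ - ‖x n‖⁻¹| * ‖x n‖ = |‖x n‖ - ‖pos (w n)‖| / ‖pos (w n)‖ := by
      rw [inv_sub_inv hyn.ne' hxn.ne', abs_div, abs_of_pos (mul_pos hyn hxn)]
      field_simp
    calc ‖‖pos (w n)‖⁻¹ • pos (w 0) + (‖pos (w n)‖⁻¹ - ‖x n‖⁻¹) • x n‖
        ≤ ‖‖pos (w n)‖⁻¹ • pos (w 0)‖ + ‖(‖pos (w n)‖⁻¹ - ‖x n‖⁻¹) • x n‖ := norm_add_le _ _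
      _ = ‖pos (w n)‖⁻¹ * ‖pos (w 0)‖ + |‖pos (w n)‖⁻¹ - ‖x n‖⁻¹| * ‖x n‖ := by
          rw [norm_smul, norm_smul, Real.norm_eq_abs, Real.norm_eq_abs,
            abs_of_pos (inv_pos.mpr hyn)]
      _ ≤ ‖pos (w n)‖⁻¹ * ‖pos (w 0)‖ + ‖pos (w 0)‖ / ‖pos (w n)‖ := by
          rw [heq]
          gcongr
      _ = 2 * ‖pos (w 0)‖ / ‖pos (w n)‖ := by rw [inv_mul_eq_div]; ring
  have hfinal := hxhat.add hdiff
  simpa using hfinal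
end

section
/- Let R be a tree whose vertex set U ⊂ ℝ^d is locally finite and asymptotically omnidirectional (for every K, {q/|q| : q ∈ U, |q| > K} is dense in S^{d−1}), with every vertex of finite degree, and suppose R is f-straight at a vertex u with f(ℓ) → 0 as ℓ → ∞. Then for every direction x̂ ∈ S^{d−1} there exists a semi-infinite path in R starting from u with asymptotic direction x̂. -/
open Filter InnerProductGeometry

lemma aux_pigeon {α β : Type*} {T : Set α} (hT : T.Infinite) (g : α → β) {N : Set β}
    (hN : N.Finite) (hg : ∀ a ∈ T, g a ∈ N) : ∃ b, {a | a ∈ T ∧ g a = b}.Infinite := by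
  by_contra h
  push_neg at h
  have : T ⊆ ⋃ b ∈ N, {a | a ∈ T ∧ g a = b} := by
    intro a ha; exact Set.mem_biUnion (hg a ha) ⟨ha, rfl⟩
  exact hT ((hN.biUnion fun b _ => h b).subset this)

lemma aux_normsq {E : Type*} [NormedAddCommGroup E] [InnerProductSpace ℝ E]
    (x y : E) (hx : x ≠ 0) (hy : y ≠ 0) :
    ‖‖x‖⁻¹ • x - ‖y‖⁻¹ • y‖ ^ 2 = 2 - 2 * Real.cos (angle x y) := by
  have hx0 : (0:ℝ) < ‖x‖ := norm_pos_iff.mpr hx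
  have hy0 : (0:ℝ) < ‖y‖ := norm_pos_iff.mpr hy
  have h1 : ‖‖x‖⁻¹ • x‖ = 1 := by
    rw [norm_smul, norm_inv, norm_norm, inv_mul_cancel₀ hx0.ne']
  have h2 : ‖‖y‖⁻¹ • y‖ = 1 := by
    rw [norm_smul, norm_inv, norm_norm, inv_mul_cancel₀ hy0.ne']
  rw [norm_sub_sq_real, h1, h2, cos_angle, real_inner_smul_left, real_inner_smul_right]
  field_simp
  ring

lemma aux_shift {E : Type*} [NormedAddCommGroup E] [InnerProductSpace ℝ E]
    (x c : E) (h : ‖c‖ < ‖x‖) :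
    ‖‖x‖⁻¹ • x - ‖x - c‖⁻¹ • (x - c)‖ ≤ 2 * ‖c‖ / ‖x‖ := by
  have hx0 : (0:ℝ) < ‖x‖ := lt_of_le_of_lt (norm_nonneg c) h
  have hxc : x - c ≠ 0 := by
    intro h0
    rw [sub_eq_zero] at h0
    rw [h0] at h
    exact lt_irrefl _ h
  have hb0 : (0:ℝ) < ‖x - c‖ := norm_pos_iff.mpr hxc
  have key : ‖x‖⁻¹ • x - ‖x - c‖⁻¹ • (x - c)
      = ‖x‖⁻¹ • c + (‖x‖⁻¹ - ‖x - c‖⁻¹) • (x - c) := by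
    module
  rw [key]
  have h2 : |‖x‖⁻¹ - ‖x - c‖⁻¹| * ‖x - c‖ = |‖x - c‖ - ‖x‖| / ‖x‖ := by
    have : ‖x‖⁻¹ - ‖x - c‖⁻¹ = (‖x - c‖ - ‖x‖) / (‖x‖ * ‖x - c‖) := by
      field_simp
    rw [this, abs_div, abs_of_pos (mul_pos hx0 hb0), div_mul_eq_mul_div,
      mul_comm ‖x‖ ‖x - c‖, ← div_div, mul_div_assoc, div_self hb0.ne', mul_one]
  have h3 : |‖x - c‖ - ‖x‖| ≤ ‖c‖ := by
    have := abs_norm_sub_norm_le (x - c) x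
    simpa using this
  calc ‖‖x‖⁻¹ • c + (‖x‖⁻¹ - ‖x - c‖⁻¹) • (x - c)‖
      ≤ ‖‖x‖⁻¹ • c‖ + ‖(‖x‖⁻¹ - ‖x - c‖⁻¹) • (x - c)‖ := norm_add_le _ _
    _ = ‖x‖⁻¹ * ‖c‖ + |‖x‖⁻¹ - ‖x - c‖⁻¹| * ‖x - c‖ := by
        rw [norm_smul, norm_smul, norm_inv, norm_norm, Real.norm_eq_abs]
    _ ≤ ‖c‖ / ‖x‖ + ‖c‖ / ‖x‖ := by
        rw [h2]
        gcongr ?_ + ?_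
        · rw [inv_mul_eq_div]
        · exact div_le_div_of_nonneg_right h3 hx0.le
    _ = 2 * ‖c‖ / ‖x‖ := by ring

lemma aux_step {V : Type*} [DecidableEq V] {G : SimpleGraph V} (hG : G.IsTree) {u b : V}
    (q : G.Walk u b) (hq : q.IsPath) {v : V} (hv : v ≠ b)
    (hbey : ∀ p : G.Walk u v, p.IsPath → b ∈ p.support) :
    ∃ c, G.Adj b c ∧ c ∉ q.support ∧ ∀ p : G.Walk u v, p.IsPath → c ∈ p.support := by
  obtain ⟨P, hP, hPuniq⟩ := hG.existsUnique_path u v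
  have hb : b ∈ P.support := hbey P hP
  set r := P.dropUntil b hb with hr
  have hrnn : ¬ r.Nil := SimpleGraph.Walk.not_nil_of_ne (Ne.symm hv)
  obtain ⟨c, hadj, r', hr'⟩ := SimpleGraph.Walk.not_nil_iff.mp hrnn
  have hqeq : P.takeUntil b hb = q := (hG.existsUnique_path u b).unique (hP.takeUntil hb) hq
  have hctail : c ∈ r.support.tail := by
    rw [hr']
    simp [SimpleGraph.Walk.support_cons]
  have hnodup : ((P.takeUntil b hb).support ++ r.support.tail).Nodup := by
    have := hP.support_nodup
    rwa [← SimpleGraph.Walk.take_spec P hb, SimpleGraph.Walk.support_append] at this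
  have hcq : c ∉ q.support := by
    rw [← hqeq]
    exact fun hc => (List.disjoint_of_nodup_append hnodup) hc hctail
  refine ⟨c, hadj, hcq, fun p hp => ?_⟩
  rw [hPuniq p hp]
  have : c ∈ r.support := List.mem_of_mem_tail hctail
  exact SimpleGraph.Walk.support_dropUntil_subset P hb this

structure AuxState {V : Type*} (G : SimpleGraph V) (u : V) (tgt : ℕ → V) where
  b : V
  q : G.Walk u b
  hq : q.IsPath
  T : Set ℕ
  hT : T.Infinite
  hbey : ∀ k ∈ T, ∀ p : G.Walk u (tgt k), p.IsPath → b ∈ p.support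

lemma aux_next {V : Type*} [DecidableEq V] {G : SimpleGraph V} (hG : G.IsTree) (u : V)
    (tgt : ℕ → V) (htgt : ∀ b : V, {k : ℕ | tgt k = b}.Finite)
    (hdeg : ∀ v : V, {v' : V | G.Adj v v'}.Finite)
    (s : AuxState G u tgt) :
    ∃ t : AuxState G u tgt, G.Adj s.b t.b ∧ t.q.support = s.q.support ++ [t.b] ∧
      t.b ∉ s.q.support ∧ t.T ⊆ s.T := by
  classical
  set T' : Set ℕ := s.T \ {k | tgt k = s.b} with hT'def
  have hT' : T'.Infinite := s.hT.diff (htgt s.b)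
  have hex : ∀ k : ℕ, ∃ c : V, k ∈ T' →
      G.Adj s.b c ∧ c ∉ s.q.support ∧ ∀ p : G.Walk u (tgt k), p.IsPath → c ∈ p.support := by
    intro k
    by_cases hk : k ∈ T'
    · obtain ⟨c, hc⟩ := aux_step hG s.q s.hq (show tgt k ≠ s.b from hk.2)
        (s.hbey k hk.1)
      exact ⟨c, fun _ => hc⟩
    · exact ⟨u, fun h => absurd h hk⟩
  choose g hg using hex
  obtain ⟨c, hc⟩ := aux_pigeon hT' g (hdeg s.b) (fun k hk => (hg k hk).1)
  obtain ⟨k0, hk0⟩ := hc.nonempty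
  have hadj : G.Adj s.b c := hk0.2 ▸ (hg k0 hk0.1).1
  have hcns : c ∉ s.q.support := hk0.2 ▸ (hg k0 hk0.1).2.1
  have hpath : (s.q.concat hadj).IsPath := by
    rw [SimpleGraph.Walk.isPath_def, SimpleGraph.Walk.support_concat]
    simp only [List.concat_eq_append, List.nodup_append, List.nodup_cons, List.nodup_nil,
      List.mem_singleton]
    refine ⟨s.hq.support_nodup, by simp, ?_⟩
    intro a ha
    rintro _ rfl rfl
    exact hcns ha
  refine ⟨⟨c, s.q.concat hadj, hpath, {k | k ∈ T' ∧ g k = c}, hc, ?_⟩,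
    hadj, ?_, hcns, fun k hk => hk.1.1⟩
  · intro k hk p hp
    exact hk.2 ▸ (hg k hk.1).2.2 p hp
  · simp [SimpleGraph.Walk.support_concat, List.concat_eq_append]

/-- Proposition 2.8(ii): in a tree embedded in `ℝ^d` with locally finite,
asymptotically omnidirectional vertex set, finite vertex degrees, and `f`-straightness
at `u` with `f(ℓ) → 0`, every direction is the asymptotic direction of some
semi-infinite self-avoiding path from `u`. -/
theorem stmt18 {d : ℕ} {V : Type*} (G : SimpleGraph V) (hG : G.IsTree)
    (pos : V → EuclideanSpace ℝ (Fin d)) (hinj : Function.Injective pos)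
    (hlf : ∀ r : ℝ, {v : V | ‖pos v‖ ≤ r}.Finite)
    (homni : ∀ K : ℝ, ∀ y : EuclideanSpace ℝ (Fin d), ‖y‖ = 1 → ∀ ε > (0 : ℝ),
      ∃ v : V, K < ‖pos v‖ ∧ ‖‖pos v‖⁻¹ • pos v - y‖ < ε)
    (hdeg : ∀ v : V, {v' : V | G.Adj v v'}.Finite)
    (f : ℝ → ℝ) (hf : Tendsto f atTop (nhds 0))
    (u : V)
    (hstraight : {u' : V |
      ¬ ∀ u'' : V, (∀ p : G.Walk u u'', p.IsPath → u' ∈ p.support) →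
          angle (pos u' - pos u) (pos u'' - pos u) ≤ f ‖pos u' - pos u‖}.Finite) :
    ∀ xhat : EuclideanSpace ℝ (Fin d), ‖xhat‖ = 1 →
      ∃ w : ℕ → V, w 0 = u ∧ (∀ n : ℕ, G.Adj (w n) (w (n + 1))) ∧
        Function.Injective w ∧
        Tendsto (fun n => ‖pos (w n)‖⁻¹ • pos (w n)) atTop (nhds xhat) := by
  classical
  intro xhat hxhat
  -- target sequence
  have htgtex : ∀ k : ℕ, ∃ v : V, (k : ℝ) < ‖pos v‖ ∧
      ‖‖pos v‖⁻¹ • pos v - xhat‖ < 1 / (k + 1) :=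
    fun k => homni k xhat hxhat (1 / (k + 1)) (by positivity)
  choose tgt htgt1 htgt2 using htgtex
  have htgtfin : ∀ b : V, {k : ℕ | tgt k = b}.Finite := by
    intro b
    refine (Set.finite_Iio ⌈‖pos b‖⌉₊).subset ?_
    intro k hk
    simp only [Set.mem_setOf_eq] at hk
    have : (k : ℝ) < ‖pos b‖ := hk ▸ htgt1 k
    exact Nat.lt_ceil.mpr this
  -- state sequence
  set s0 : AuxState G u tgt :=
    ⟨u, SimpleGraph.Walk.nil, SimpleGraph.Walk.IsPath.nil, Set.univ, Set.infinite_univ,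
      fun k _ p _ => p.start_mem_support⟩ with hs0
  set st : ℕ → AuxState G u tgt :=
    fun n => Nat.rec s0 (fun _ s => (aux_next hG u tgt htgtfin hdeg s).choose) n with hstdef
  have hst : ∀ n, G.Adj (st n).b (st (n + 1)).b ∧
      (st (n + 1)).q.support = (st n).q.support ++ [(st (n + 1)).b] ∧
      (st (n + 1)).b ∉ (st n).q.support ∧ (st (n + 1)).T ⊆ (st n).T :=
    fun n => (aux_next hG u tgt htgtfin hdeg (st n)).choose_spec
  set w : ℕ → V := fun n => (st n).b with hwdef
  have hw0 : w 0 = u := rfl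
  have hsupp : ∀ n, (st n).q.support = (List.range (n + 1)).map w := by
    intro n
    induction n with
    | zero =>
        show ([u] : List V) = _
        rw [show List.range 1 = [0] from rfl]
        simp [hw0]
    | succ n ih =>
        rw [(hst n).2.1, ih]
        simp [List.range_succ]
        rfl
  have hwinj : Function.Injective w := by
    have hlt : ∀ n m, n < m → w n ≠ w m := by
      intro n m hnm heq
      obtain ⟨m', rfl⟩ : ∃ m', m = m' + 1 := ⟨m - 1, by omega⟩
      apply (hst m').2.2.1
      rw [hsupp m']
      have hmem : w n ∈ List.map w (List.range (m' + 1)) :=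
        List.mem_map_of_mem (List.mem_range.mpr hnm)
      rwa [heq] at hmem
    intro a b hab
    rcases lt_trichotomy a b with h | h | h
    · exact absurd hab (hlt a b h)
    · exact h
    · exact absurd hab.symm (hlt b a h)
  refine ⟨w, hw0, fun n => (hst n).1, hwinj, ?_⟩
  -- norms tend to infinity
  have hcof : ∀ r : ℝ, ∀ᶠ m in atTop, r ≤ ‖pos (w m)‖ := by
    intro r
    rw [← Nat.cofinite_eq_atTop]
    refine Filter.eventually_cofinite.mpr (((hlf r).preimage hwinj.injOn).subset ?_)
    intro m hm
    simp only [Set.mem_setOf_eq, not_le] at hm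
    exact le_of_lt hm
  have hwtend : Tendsto (fun m => ‖pos (w m)‖) atTop atTop := tendsto_atTop.mpr hcof
  have hdtend : Tendsto (fun m => ‖pos (w m) - pos u‖) atTop atTop := by
    refine tendsto_atTop_mono (fun m => ?_) (tendsto_atTop_add_const_right _ (-‖pos u‖) hwtend)
    have := norm_sub_norm_le (pos (w m)) (pos u)
    linarith
  have hθ : Tendsto (fun m => f ‖pos (w m) - pos u‖) atTop (nhds 0) := hf.comp hdtend
  have hEev : ∀ᶠ m in atTop, ∀ u'' : V,
      (∀ p : G.Walk u u'', p.IsPath → w m ∈ p.support) →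
        angle (pos (w m) - pos u) (pos u'' - pos u) ≤ f ‖pos (w m) - pos u‖ := by
    rw [← Nat.cofinite_eq_atTop]
    exact Filter.eventually_cofinite.mpr
      ((hstraight.preimage hwinj.injOn).subset fun m hm => hm)
  have hcos : Tendsto (fun m => 2 - 2 * Real.cos (f ‖pos (w m) - pos u‖)) atTop (nhds 0) := by
    have h1 : Tendsto (fun m => Real.cos (f ‖pos (w m) - pos u‖)) atTop (nhds 1) := by
      have := (Real.continuous_cos.tendsto 0).comp hθ
      simpa [Function.comp_def] using this
    have h2 : Tendsto (fun m => 2 - 2 * Real.cos (f ‖pos (w m) - pos u‖)) atTop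
        (nhds (2 - 2 * 1)) := tendsto_const_nhds.sub (h1.const_mul 2)
    norm_num at h2
    exact h2
  rw [Metric.tendsto_atTop]
  intro ε hε
  have E3 : ∀ᶠ m in atTop, f ‖pos (w m) - pos u‖ < Real.pi :=
    hθ.eventually_lt_const Real.pi_pos
  have E4 : ∀ᶠ m in atTop, 2 - 2 * Real.cos (f ‖pos (w m) - pos u‖) < (ε / 4) ^ 2 :=
    hcos.eventually_lt_const (by positivity)
  have E5 : ∀ᶠ m in atTop, 2 * ‖pos u‖ / ‖pos (w m)‖ < ε / 4 := by
    have : Tendsto (fun m => 2 * ‖pos u‖ / ‖pos (w m)‖) atTop (nhds 0) :=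
      Tendsto.div_atTop tendsto_const_nhds hwtend
    exact this.eventually_lt_const (by positivity)
  have E6 : ∀ᶠ m in atTop, ‖pos u‖ < ‖pos (w m)‖ := hwtend.eventually_gt_atTop ‖pos u‖
  obtain ⟨N, hN⟩ := eventually_atTop.mp
    (hEev.and ((eventually_ge_atTop 1).and (E3.and (E4.and (E5.and E6)))))
  refine ⟨N, fun m hm => ?_⟩
  obtain ⟨h1, h2, h3, h4, h5, h6⟩ := hN m hm
  -- choose a far target beyond w m
  set K0 : ℕ := ⌈max (8 / ε) (max (8 * ‖pos u‖ / ε) ‖pos u‖)⌉₊ with hK0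
  obtain ⟨k, hkT, hkgt⟩ := (st m).hT.exists_gt K0
  have hkR : (K0 : ℝ) < (k : ℝ) := Nat.cast_lt.mpr hkgt
  have hmax : max (8 / ε) (max (8 * ‖pos u‖ / ε) ‖pos u‖) ≤ (K0 : ℝ) := Nat.le_ceil _
  have hk8 : 8 / ε < (k : ℝ) := lt_of_le_of_lt ((le_max_left _ _).trans hmax) hkR
  have hk8u : 8 * ‖pos u‖ / ε < (k : ℝ) :=
    lt_of_le_of_lt (((le_max_left _ _).trans (le_max_right _ _)).trans hmax) hkR
  have hku' : ‖pos u‖ < (k : ℝ) :=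
    lt_of_le_of_lt (((le_max_right _ _).trans (le_max_right _ _)).trans hmax) hkR
  have hnk : (k : ℝ) < ‖pos (tgt k)‖ := htgt1 k
  have hnk0 : (0 : ℝ) < ‖pos (tgt k)‖ := lt_of_le_of_lt (Nat.cast_nonneg k) hnk
  have hku : ‖pos u‖ < ‖pos (tgt k)‖ := lt_trans hku' hnk
  have htk_ne : pos (tgt k) - pos u ≠ 0 := by
    refine sub_ne_zero.mpr fun h => ?_
    rw [h] at hku
    exact lt_irrefl _ hku
  have hwm_ne_u : w m ≠ u := by
    intro h
    have : m = 0 := hwinj (by rw [h, hw0])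
    omega
  have hwm_ne : pos (w m) - pos u ≠ 0 := sub_ne_zero.mpr fun h => hwm_ne_u (hinj h)
  have hangm : angle (pos (w m) - pos u) (pos (tgt k) - pos u) ≤ f ‖pos (w m) - pos u‖ :=
    h1 (tgt k) ((st m).hbey k hkT)
  -- the four bounds
  have b1 : ‖(‖pos (w m)‖⁻¹ • pos (w m)) - (‖pos (w m) - pos u‖⁻¹ • (pos (w m) - pos u))‖
      < ε / 4 := lt_of_le_of_lt (aux_shift (pos (w m)) (pos u) h6) h5
  have b2 : ‖(‖pos (w m) - pos u‖⁻¹ • (pos (w m) - pos u))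
      - (‖pos (tgt k) - pos u‖⁻¹ • (pos (tgt k) - pos u))‖ < ε / 4 := by
    have hsq := aux_normsq (pos (w m) - pos u) (pos (tgt k) - pos u) hwm_ne htk_ne
    have hmono : Real.cos (f ‖pos (w m) - pos u‖) ≤
        Real.cos (angle (pos (w m) - pos u) (pos (tgt k) - pos u)) :=
      Real.cos_le_cos_of_nonneg_of_le_pi (angle_nonneg _ _) h3.le hangm
    have hlt : ‖(‖pos (w m) - pos u‖⁻¹ • (pos (w m) - pos u))
        - (‖pos (tgt k) - pos u‖⁻¹ • (pos (tgt k) - pos u))‖ ^ 2 < (ε / 4) ^ 2 := by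
      rw [hsq]; linarith
    exact lt_of_pow_lt_pow_left₀ 2 (by positivity) hlt
  have b3 : ‖(‖pos (tgt k) - pos u‖⁻¹ • (pos (tgt k) - pos u))
      - (‖pos (tgt k)‖⁻¹ • pos (tgt k))‖ < ε / 4 := by
    rw [norm_sub_rev]
    refine lt_of_le_of_lt (aux_shift (pos (tgt k)) (pos u) hku) ?_
    rw [div_lt_iff₀ hnk0]
    have h8 : 8 * ‖pos u‖ < (k : ℝ) * ε := by
      rw [div_lt_iff₀ hε] at hk8u
      linarith
    nlinarith [norm_nonneg (pos u)]
  have b4 : ‖(‖pos (tgt k)‖⁻¹ • pos (tgt k)) - xhat‖ < ε / 4 := by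
    refine lt_trans (htgt2 k) ?_
    rw [div_lt_iff₀ (by positivity)]
    rw [div_lt_iff₀ hε] at hk8
    nlinarith
  rw [dist_eq_norm]
  have t1 := dist_triangle4 (‖pos (w m)‖⁻¹ • pos (w m))
    (‖pos (w m) - pos u‖⁻¹ • (pos (w m) - pos u))
    (‖pos (tgt k) - pos u‖⁻¹ • (pos (tgt k) - pos u)) xhat
  have t2 := dist_triangle (‖pos (tgt k) - pos u‖⁻¹ • (pos (tgt k) - pos u))
    (‖pos (tgt k)‖⁻¹ • pos (tgt k)) xhat
  simp only [dist_eq_norm] at t1 t2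
  linarith
end
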